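/- arXiv:2503.09921 — 5 statements merged into one kernel-verified Lean document; each statement's English description precedes it below -/
import Mathlib

section
/- Let H(R, φ, z) be a generalized Weyl algebra with z a central non-zero-divisor of R. Then H(R, φ, z) is a free left R-module with basis {1} ∪ {xⁿ : n ≥ 1} ∪ {yⁿ : n ≥ 1}, that is, H(R, φ, z) = R ⊕ ⨁_{n≥1} Rxⁿ ⊕ ⨁_{n≥1} Ryⁿ; likewise it is a free right R-module on the same basis, H(R, φ, z) = R ⊕ ⨁_{n≥1} xⁿR ⊕ ⨁_{n≥1} yⁿR. -/
universe u

variable (R : Type u) [Ring R] (φ : R ≃+* R) (z : R)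

/-- The defining relations of the generalized Weyl algebra `H(R, φ, z)`, presented as a quotient
of the free `ℤ`-algebra on the underlying set of `R` together with two generators `x` (encoded
as `Sum.inr 0`) and `y` (encoded as `Sum.inr 1`).  The first three families of relations encode
the ring structure of `R`; the remaining ones are the GWA relations
`yx = z`, `xy = φ⁻¹(z)`, `xr = φ⁻¹(r)x`, `yr = φ(r)y`. -/
inductive GWARel : FreeAlgebra ℤ (R ⊕ Fin 2) → FreeAlgebra ℤ (R ⊕ Fin 2) → Prop
  | add (r s : R) : GWARel
      (FreeAlgebra.ι ℤ (Sum.inl r) + FreeAlgebra.ι ℤ (Sum.inl s))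
      (FreeAlgebra.ι ℤ (Sum.inl (r + s)))
  | mul (r s : R) : GWARel
      (FreeAlgebra.ι ℤ (Sum.inl r) * FreeAlgebra.ι ℤ (Sum.inl s))
      (FreeAlgebra.ι ℤ (Sum.inl (r * s)))
  | one : GWARel (FreeAlgebra.ι ℤ (Sum.inl (1 : R))) 1
  | yx : GWARel (FreeAlgebra.ι ℤ (Sum.inr 1) * FreeAlgebra.ι ℤ (Sum.inr 0))
      (FreeAlgebra.ι ℤ (Sum.inl z))
  | xy : GWARel (FreeAlgebra.ι ℤ (Sum.inr 0) * FreeAlgebra.ι ℤ (Sum.inr 1))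
      (FreeAlgebra.ι ℤ (Sum.inl (φ.symm z)))
  | xr (r : R) : GWARel (FreeAlgebra.ι ℤ (Sum.inr 0) * FreeAlgebra.ι ℤ (Sum.inl r))
      (FreeAlgebra.ι ℤ (Sum.inl (φ.symm r)) * FreeAlgebra.ι ℤ (Sum.inr 0))
  | yr (r : R) : GWARel (FreeAlgebra.ι ℤ (Sum.inr 1) * FreeAlgebra.ι ℤ (Sum.inl r))
      (FreeAlgebra.ι ℤ (Sum.inl (φ r)) * FreeAlgebra.ι ℤ (Sum.inr 1))

/-- The generalized Weyl algebra `H(R, φ, z)`. -/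
abbrev GWA : Type u := RingQuot (GWARel R φ z)

/-- The generator `x` of the generalized Weyl algebra. -/
noncomputable def GWA.X : GWA R φ z :=
  RingQuot.mkRingHom (GWARel R φ z) (FreeAlgebra.ι ℤ (Sum.inr 0))

/-- The generator `y` of the generalized Weyl algebra. -/
noncomputable def GWA.Y : GWA R φ z :=
  RingQuot.mkRingHom (GWARel R φ z) (FreeAlgebra.ι ℤ (Sum.inr 1))

/-- The canonical ring homomorphism `R → H(R, φ, z)`. -/
noncomputable def GWA.ofBase : R →+* GWA R φ z where
  toFun r := RingQuot.mkRingHom (GWARel R φ z) (FreeAlgebra.ι ℤ (Sum.inl r))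
  map_one' := by
    have := RingQuot.mkRingHom_rel (GWARel.one (R := R) (φ := φ) (z := z))
    simpa using this
  map_mul' r s := by
    have := RingQuot.mkRingHom_rel (GWARel.mul (φ := φ) (z := z) r s)
    simp only [map_mul] at this
    exact this.symm
  map_zero' := by
    have := RingQuot.mkRingHom_rel (GWARel.add (φ := φ) (z := z) 0 0)
    simp only [map_add, add_zero] at this
    exact add_eq_left.mp this
  map_add' r s := by
    have := RingQuot.mkRingHom_rel (GWARel.add (φ := φ) (z := z) r s)
    simp only [map_add] at this
    exact this.symm

/-!
`H` acts on `ℤ →₀ R`, the would-be free left `R`-module on the monomials `vₙ` (`xⁿ` for `n ≥ 0`,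
`y⁻ⁿ` for `n < 0`): `r ∈ R` acts by left multiplication, and `x`, `y` act by the operators read
off from rewriting `x (r vₙ)` and `y (r vₙ)` as `r' vₙ₊₁` and `r'' vₙ₋₁` with the defining
relations; centrality of `z` makes these operators satisfy `yx = z` and `xy = φ⁻¹(z)`. Evaluating
the action of `h` at `v₀` produces coordinates `c` with `h = ∑ cₙ vₙ`, and the action of `∑ cₙ vₙ`
sends `v₀` back to `c`, so coordinates are unique. The right-module statement follows by moving
coefficients across monomials, `vₙ r = φ⁻ⁿ(r) vₙ`.
-/

namespace Finsupp

variable {ι M : Type*} [AddCommMonoid M]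

noncomputable def mapRangeIndexedAddEquiv (e : ι → M ≃+ M) : (ι →₀ M) ≃+ (ι →₀ M) :=
  AddMonoidHom.toAddEquiv (liftAddHom fun i => (singleAddHom i).comp (e i).toAddMonoidHom)
    (liftAddHom fun i => (singleAddHom i).comp (e i).symm.toAddMonoidHom)
    (addHom_ext fun _ _ => by simp) (addHom_ext fun _ _ => by simp)

@[simp]
lemma mapRangeIndexedAddEquiv_single (e : ι → M ≃+ M) (i : ι) (m : M) :
    mapRangeIndexedAddEquiv e (single i m) = single i (e i m) :=
  liftAddHom_apply_single _ _ _

lemma addMonoidEnd_ext {f g : AddMonoid.End (ι →₀ M)}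
    (h : ∀ i m, f (single i m) = g (single i m)) : f = g :=
  addHom_ext h

end Finsupp

lemma AddMonoid.End.add_apply {M : Type*} [AddCommMonoid M] (f g : AddMonoid.End M) (m : M) :
    (f + g) m = f m + g m :=
  rfl

lemma pow_mul_map_of_mul_map {S A : Type*} [Semiring S] [Semiring A] (f : S →+* A)
    (ψ : S ≃+* S) (a : A) (h : ∀ s, a * f s = f (ψ s) * a) (k : ℕ) (s : S) :
    a ^ k * f s = f ((ψ ^ k) s) * a ^ k := by
  induction k with
  | zero => simp
  | succ k ih =>
    rw [pow_succ', mul_assoc, ih, ← mul_assoc, h, pow_succ', RingAut.mul_apply, mul_assoc]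

namespace GWA

variable {R φ z}

lemma Y_mul_X : Y R φ z * X R φ z = ofBase R φ z z :=
  (map_mul _ _ _).symm.trans (RingQuot.mkRingHom_rel GWARel.yx)

lemma X_mul_Y : X R φ z * Y R φ z = ofBase R φ z (φ.symm z) :=
  (map_mul _ _ _).symm.trans (RingQuot.mkRingHom_rel GWARel.xy)

lemma X_mul_ofBase (r : R) : X R φ z * ofBase R φ z r = ofBase R φ z (φ.symm r) * X R φ z :=
  (map_mul _ _ _).symm.trans ((RingQuot.mkRingHom_rel (GWARel.xr r)).trans (map_mul _ _ _))

lemma Y_mul_ofBase (r : R) : Y R φ z * ofBase R φ z r = ofBase R φ z (φ r) * Y R φ z :=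
  (map_mul _ _ _).symm.trans ((RingQuot.mkRingHom_rel (GWARel.yr r)).trans (map_mul _ _ _))

@[elab_as_elim]
lemma induction_on {P : GWA R φ z → Prop} (h : GWA R φ z) (base : ∀ r, P (ofBase R φ z r))
    (x : P (X R φ z)) (y : P (Y R φ z)) (add : ∀ a b, P a → P b → P (a + b))
    (mul : ∀ a b, P a → P b → P (a * b)) : P h := by
  obtain ⟨a, rfl⟩ := RingQuot.mkRingHom_surjective _ h
  induction a using FreeAlgebra.induction with
  | grade0 k => simpa using base k
  | grade1 v =>
    rcases v with r | i
    · exact base r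
    · fin_cases i
      exacts [x, y]
  | mul a b ha hb => simpa using mul _ _ ha hb
  | add a b ha hb => simpa using add _ _ ha hb

variable (R φ z) in
noncomputable def monomial (n : ℤ) : GWA R φ z :=
  if 0 ≤ n then X R φ z ^ n.toNat else Y R φ z ^ (-n).toNat

lemma monomial_natCast (k : ℕ) : monomial R φ z k = X R φ z ^ k := by
  simp [monomial]

lemma monomial_neg_natCast (k : ℕ) : monomial R φ z (-k) = Y R φ z ^ k := by
  rcases k with _ | k
  · simp [monomial]
  · rw [monomial, if_neg (by omega), neg_neg, Int.toNat_natCast]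

lemma monomial_zero : monomial R φ z 0 = 1 := by
  simp [monomial]

lemma X_mul_monomial (n : ℤ) :
    X R φ z * monomial R φ z n
      = ofBase R φ z (if 0 ≤ n then 1 else φ.symm z) * monomial R φ z (n + 1) := by
  cases n with
  | ofNat k =>
    rw [Int.ofNat_eq_natCast, if_pos (by positivity), map_one, one_mul, monomial_natCast,
      ← pow_succ', ← Nat.cast_succ, monomial_natCast]
  | negSucc k =>
    rw [Int.negSucc_eq, show -((k : ℤ) + 1) + 1 = -k by ring, ← Nat.cast_succ, if_neg (by omega),
      monomial_neg_natCast, monomial_neg_natCast, pow_succ', ← mul_assoc, X_mul_Y]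

lemma Y_mul_monomial (n : ℤ) :
    Y R φ z * monomial R φ z n
      = ofBase R φ z (if 1 ≤ n then z else 1) * monomial R φ z (n - 1) := by
  cases n with
  | ofNat k =>
    rcases k with _ | k
    · rw [Int.ofNat_eq_natCast, if_neg (by omega), map_one, one_mul, Nat.cast_zero, zero_sub,
        monomial_zero, mul_one, ← Nat.cast_one, monomial_neg_natCast, pow_one]
    · rw [Int.ofNat_eq_natCast, if_pos (by omega), Nat.cast_succ, add_sub_cancel_right,
        monomial_natCast, ← Nat.cast_succ, monomial_natCast, pow_succ', ← mul_assoc, Y_mul_X]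
  | negSucc k =>
    rw [Int.negSucc_eq, if_neg (by omega), map_one, one_mul,
      show -((k : ℤ) + 1) - 1 = -((k + 1 + 1 : ℕ) : ℤ) by push_cast; ring, ← Nat.cast_succ,
      monomial_neg_natCast, monomial_neg_natCast, ← pow_succ']

lemma monomial_mul_ofBase (n : ℤ) (r : R) :
    monomial R φ z n * ofBase R φ z r = ofBase R φ z ((φ ^ (-n)) r) * monomial R φ z n := by
  obtain ⟨k, rfl | rfl⟩ := Int.eq_nat_or_neg n
  · rw [monomial_natCast, zpow_neg, zpow_natCast, ← inv_pow]
    exact pow_mul_map_of_mul_map _ φ⁻¹ _ X_mul_ofBase k r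
  · rw [monomial_neg_natCast, neg_neg, zpow_natCast]
    exact pow_mul_map_of_mul_map _ φ _ Y_mul_ofBase k r

variable (R φ z) in
noncomputable def leftSum : (ℤ →₀ R) →+ GWA R φ z :=
  Finsupp.liftAddHom fun n => (AddMonoidHom.mulRight (monomial R φ z n)).comp (ofBase R φ z)

variable (R φ z) in
noncomputable def rightSum : (ℤ →₀ R) →+ GWA R φ z :=
  Finsupp.liftAddHom fun n => (AddMonoidHom.mulLeft (monomial R φ z n)).comp (ofBase R φ z)

lemma leftSum_single (n : ℤ) (r : R) :
    leftSum R φ z (Finsupp.single n r) = ofBase R φ z r * monomial R φ z n :=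
  Finsupp.liftAddHom_apply_single _ _ _

lemma leftSum_apply (c : ℤ →₀ R) :
    leftSum R φ z c = c.sum fun n r => ofBase R φ z r * monomial R φ z n :=
  Finsupp.liftAddHom_apply _ _

lemma rightSum_apply (c : ℤ →₀ R) :
    rightSum R φ z c = c.sum fun n r => monomial R φ z n * ofBase R φ z r :=
  Finsupp.liftAddHom_apply _ _

lemma rightSum_eq_leftSum_comp : rightSum R φ z = (leftSum R φ z).comp
    (Finsupp.mapRangeIndexedAddEquiv fun n => (φ ^ (-n)).toAddEquiv).toAddMonoidHom :=
  Finsupp.addHom_ext fun n r => by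
    simp [rightSum, leftSum_single, monomial_mul_ofBase]

lemma leftSum_apply_eq_mul {T : AddMonoid.End (ℤ →₀ R)} {a : GWA R φ z}
    (h : ∀ n c, leftSum R φ z (T (Finsupp.single n c)) = a * leftSum R φ z (Finsupp.single n c))
    (m : ℤ →₀ R) : leftSum R φ z (T m) = a * leftSum R φ z m := by
  induction m using Finsupp.induction_linear with
  | zero => simp
  | add f g hf hg => rw [map_add, map_add, hf, hg, map_add, mul_add]
  | single n c => exact h n c

-- The coefficients are those of `X_mul_monomial` and `Y_mul_monomial`.
variable (R φ z) in
noncomputable def xOp : AddMonoid.End (ℤ →₀ R) :=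
  Finsupp.liftAddHom fun n => (Finsupp.singleAddHom (n + 1)).comp
    ((AddMonoidHom.mulRight (if 0 ≤ n then 1 else φ.symm z)).comp φ.symm.toAddMonoidHom)

variable (R φ z) in
noncomputable def yOp : AddMonoid.End (ℤ →₀ R) :=
  Finsupp.liftAddHom fun n => (Finsupp.singleAddHom (n - 1)).comp
    ((AddMonoidHom.mulRight (if 1 ≤ n then z else 1)).comp φ.toAddMonoidHom)

@[simp]
lemma xOp_single (n : ℤ) (c : R) :
    xOp R φ z (Finsupp.single n c)
      = Finsupp.single (n + 1) (φ.symm c * if 0 ≤ n then 1 else φ.symm z) :=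
  Finsupp.liftAddHom_apply_single _ _ _

@[simp]
lemma yOp_single (n : ℤ) (c : R) :
    yOp R φ z (Finsupp.single n c) = Finsupp.single (n - 1) (φ c * if 1 ≤ n then z else 1) :=
  Finsupp.liftAddHom_apply_single _ _ _

@[simp]
lemma toAddMonoidEnd_single (r : R) (n : ℤ) (c : R) :
    Module.toAddMonoidEnd R (ℤ →₀ R) r (Finsupp.single n c) = Finsupp.single n (r * c) :=
  Finsupp.smul_single _ _ _

lemma commute_symm_of_mem_center (hz : z ∈ Set.center R) (c : R) : Commute (φ.symm z) c := by
  simpa using (hz.comm (φ c)).map φ.symm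

lemma yOp_mul_xOp (hz : z ∈ Set.center R) :
    yOp R φ z * xOp R φ z = Module.toAddMonoidEnd R (ℤ →₀ R) z := by
  refine Finsupp.addMonoidEnd_ext fun n c => ?_
  simp only [AddMonoid.End.coe_mul, Function.comp_apply, xOp_single, yOp_single,
    toAddMonoidEnd_single, add_sub_cancel_right]
  rcases le_or_gt 0 n with hn | hn
  · simp [hn, (hz.comm c).eq]
  · simp [hn.not_ge, show ¬ 1 ≤ n + 1 by omega, (hz.comm c).eq]

lemma xOp_mul_yOp (hz : z ∈ Set.center R) :
    xOp R φ z * yOp R φ z = Module.toAddMonoidEnd R (ℤ →₀ R) (φ.symm z) := by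
  refine Finsupp.addMonoidEnd_ext fun n c => ?_
  simp only [AddMonoid.End.coe_mul, Function.comp_apply, xOp_single, yOp_single,
    toAddMonoidEnd_single, sub_add_cancel]
  rcases le_or_gt 1 n with hn | hn
  · simp [-Finsupp.single_mul, hn, (commute_symm_of_mem_center hz c).eq]
  · simp [-Finsupp.single_mul, hn.not_ge, (commute_symm_of_mem_center hz c).eq]

lemma xOp_mul_toAddMonoidEnd (r : R) :
    xOp R φ z * Module.toAddMonoidEnd R (ℤ →₀ R) r
      = Module.toAddMonoidEnd R (ℤ →₀ R) (φ.symm r) * xOp R φ z := by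
  refine Finsupp.addMonoidEnd_ext fun n c => ?_
  simp [-Finsupp.single_mul, mul_assoc]

lemma yOp_mul_toAddMonoidEnd (r : R) :
    yOp R φ z * Module.toAddMonoidEnd R (ℤ →₀ R) r
      = Module.toAddMonoidEnd R (ℤ →₀ R) (φ r) * yOp R φ z := by
  refine Finsupp.addMonoidEnd_ext fun n c => ?_
  simp [-Finsupp.single_mul, mul_assoc]

-- `Ring.toIntAlgebra` is not found by instance search on `AddMonoid.End`.
noncomputable def coordRep (hz : z ∈ Set.center R) : GWA R φ z →+* AddMonoid.End (ℤ →₀ R) :=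
  letI := Ring.toIntAlgebra (AddMonoid.End (ℤ →₀ R))
  RingQuot.lift ⟨(FreeAlgebra.lift ℤ (Sum.elim (Module.toAddMonoidEnd R (ℤ →₀ R))
      ![xOp R φ z, yOp R φ z])).toRingHom, fun _ _ h => by
    cases h <;> simp [yOp_mul_xOp hz, xOp_mul_yOp hz, xOp_mul_toAddMonoidEnd,
      yOp_mul_toAddMonoidEnd]⟩

@[simp]
lemma coordRep_ofBase (hz : z ∈ Set.center R) (r : R) :
    coordRep hz (ofBase R φ z r) = Module.toAddMonoidEnd R (ℤ →₀ R) r :=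
  (RingQuot.lift_mkRingHom_apply _ _ _).trans (by simp)

@[simp]
lemma coordRep_X (hz : z ∈ Set.center R) : coordRep hz (X R φ z) = xOp R φ z :=
  (RingQuot.lift_mkRingHom_apply _ _ _).trans (by simp)

@[simp]
lemma coordRep_Y (hz : z ∈ Set.center R) : coordRep hz (Y R φ z) = yOp R φ z :=
  (RingQuot.lift_mkRingHom_apply _ _ _).trans (by simp)

lemma leftSum_coordRep (hz : z ∈ Set.center R) (h : GWA R φ z) (m : ℤ →₀ R) :
    leftSum R φ z (coordRep hz h m) = h * leftSum R φ z m := by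
  induction h using induction_on generalizing m with
  | base r =>
    refine leftSum_apply_eq_mul (fun n c => ?_) m
    rw [coordRep_ofBase, toAddMonoidEnd_single, leftSum_single, leftSum_single, map_mul, mul_assoc]
  | x =>
    refine leftSum_apply_eq_mul (fun n c => ?_) m
    rw [coordRep_X, xOp_single, leftSum_single, leftSum_single, ← mul_assoc, X_mul_ofBase,
      mul_assoc, X_mul_monomial, map_mul, mul_assoc]
  | y =>
    refine leftSum_apply_eq_mul (fun n c => ?_) m
    rw [coordRep_Y, yOp_single, leftSum_single, leftSum_single, ← mul_assoc, Y_mul_ofBase,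
      mul_assoc, Y_mul_monomial, map_mul, mul_assoc]
  | add a b ha hb => rw [map_add, AddMonoid.End.add_apply, map_add, ha, hb, add_mul]
  | mul a b ha hb => rw [map_mul, AddMonoid.End.coe_mul, Function.comp_apply, ha, hb, mul_assoc]

lemma coordRep_monomial (hz : z ∈ Set.center R) (n : ℤ) :
    coordRep hz (monomial R φ z n) (Finsupp.single 0 1) = Finsupp.single n 1 := by
  obtain ⟨k, rfl | rfl⟩ := Int.eq_nat_or_neg n
  · induction k with
    | zero => simp [monomial_zero]
    | succ k ih =>
      rw [monomial_natCast, pow_succ', map_mul, coordRep_X, AddMonoid.End.coe_mul,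
        Function.comp_apply, ← monomial_natCast, ih, xOp_single, if_pos (by positivity)]
      simp
  · induction k with
    | zero => simp [monomial_zero]
    | succ k ih =>
      rw [monomial_neg_natCast, pow_succ', map_mul, coordRep_Y, AddMonoid.End.coe_mul,
        Function.comp_apply, ← monomial_neg_natCast, ih, yOp_single, if_neg (by omega)]
      simp [sub_eq_add_neg, add_comm]

lemma coordRep_leftSum (hz : z ∈ Set.center R) (c : ℤ →₀ R) :
    coordRep hz (leftSum R φ z c) (Finsupp.single 0 1) = c := by
  induction c using Finsupp.induction_linear with
  | zero => simp
  | add f g hf hg => rw [map_add, map_add, AddMonoid.End.add_apply, hf, hg]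
  | single n r =>
    rw [leftSum_single, map_mul, AddMonoid.End.coe_mul, Function.comp_apply, coordRep_monomial,
      coordRep_ofBase, toAddMonoidEnd_single, mul_one]

lemma leftSum_bijective (hz : z ∈ Set.center R) : Function.Bijective (leftSum R φ z) := by
  refine ⟨Function.LeftInverse.injective (g := fun h => coordRep hz h (Finsupp.single 0 1))
    (coordRep_leftSum hz), fun h => ⟨coordRep hz h (Finsupp.single 0 1), ?_⟩⟩
  rw [leftSum_coordRep, leftSum_single, map_one, one_mul, monomial_zero, mul_one]

lemma rightSum_bijective (hz : z ∈ Set.center R) : Function.Bijective (rightSum R φ z) := by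
  rw [rightSum_eq_leftSum_comp]
  exact (leftSum_bijective hz).comp (AddEquiv.bijective _)

end GWA

theorem statement4 (hz : z ∈ Set.center R) :
    (∀ h : GWA R φ z, ∃! c : ℤ →₀ R,
        h = c.sum fun n r => GWA.ofBase R φ z r *
          (if 0 ≤ n then (GWA.X R φ z) ^ n.toNat else (GWA.Y R φ z) ^ (-n).toNat)) ∧
    (∀ h : GWA R φ z, ∃! c : ℤ →₀ R,
        h = c.sum fun n r =>
          (if 0 ≤ n then (GWA.X R φ z) ^ n.toNat else (GWA.Y R φ z) ^ (-n).toNat) *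
            GWA.ofBase R φ z r) := by
  refine ⟨fun h => ?_, fun h => ?_⟩
  · refine (existsUnique_congr fun c => ?_).mp ((GWA.leftSum_bijective hz).existsUnique h)
    rw [eq_comm, GWA.leftSum_apply]
    rfl
  · refine (existsUnique_congr fun c => ?_).mp ((GWA.rightSum_bijective hz).existsUnique h)
    rw [eq_comm, GWA.rightSum_apply]
    rfl
end

section
/- With notation as in the standing completion setup: for all 0 ≤ n < l and all 0 ≤ i < l with i ≠ n, the element φ̂ⁿ(e)·φ̂ⁱ(z) is a unit of the corner ring φ̂ⁿ(e)·R̂ (a ring with identity element φ̂ⁿ(e)). In particular, there exists a unit u of the ring e·R̂ such that e·z = e·τ·u. -/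
/-!
Since `R̂` is `(τ)`-adically complete, `τR̂` lies in its Jacobson radical, so every maximal ideal
`M` of `R̂` contains `τ` and `e - r`, where `r ∈ R` lifts `e` mod `τ`. If `1 - e ∈ M`, the prime
`M ∩ R` therefore contains `τ` and `1 - r`; as `r ∈ (φⁱ(z))` for `0 < i < l`, it contains `z` and
none of the `φⁱ(z)`. Pulling back along `φ̂ⁿ`, a maximal ideal containing `1 - φ̂ⁿ(e)` contains
`φⁿ(z)`, hence not the comaximal `φⁱ(z)`. For an idempotent `E`, this is exactly what makes
`E·G + (1 - E)` a unit of `R̂`, i.e. `E·G` a unit of `E·R̂`. Taking `E = e` and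
`G = φ(z)⋯φ^{l-1}(z) = τ / z` gives `u`.
-/

universe u

section CompletionSetup

variable (R : Type u) [CommRing R] (φ : R ≃+* R) (z : R) (l : ℕ)

/-- The element `τ = z·φ(z)·φ²(z)⋯φ^{l−1}(z)`. -/
noncomputable def gwaTau : R := ∏ i ∈ Finset.range l, (φ ^ i) z

/-- The `(τ)`-adic completion `R̂` of `R`. -/
noncomputable abbrev RHat : Type u := AdicCompletion (Ideal.span {gwaTau R φ z l}) R

/-- The evaluation (projection) map `R̂ → R/(τⁿ)` from the `(τ)`-adic completion. -/
noncomputable def RHat.proj (n : ℕ) :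
    RHat R φ z l →ₗ[R]
      R ⧸ ((Ideal.span {gwaTau R φ z l}) ^ n • ⊤ : Submodule R R) :=
  AdicCompletion.eval (Ideal.span {gwaTau R φ z l}) R n

end CompletionSetup

namespace IsIdempotentElem

variable {S : Type*} [CommRing S] {E G : S}

theorem isUnit_mul_add_one_sub (hE : IsIdempotentElem E)
    (hG : ∀ M : Ideal S, M.IsMaximal → 1 - E ∈ M → G ∉ M) : IsUnit (E * G + (1 - E)) := by
  by_contra hunit
  obtain ⟨M, hM, hmem⟩ := exists_max_ideal_of_mem_nonunits hunit
  have hE_notMem : E ∉ M := fun hEM ↦ hM.ne_top <| (M.eq_top_iff_one).mpr <| by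
    simpa using M.add_mem hEM (M.sub_mem hmem (M.mul_mem_right G hEM))
  have hsub : 1 - E ∈ M :=
    (hM.isPrime.mem_or_mem (by simp [mul_sub, hE.eq, M.zero_mem])).resolve_left hE_notMem
  have hEG : E * G ∈ M := by simpa using M.sub_mem hmem hsub
  exact (hM.isPrime.mem_or_mem hEG).elim hE_notMem (hG M hM hsub)

theorem exists_corner_inverse (hE : IsIdempotentElem E)
    (hG : ∀ M : Ideal S, M.IsMaximal → 1 - E ∈ M → G ∉ M) :
    ∃ w : S, w * E = w ∧ E * G * w = E := by
  obtain ⟨ξ, hξ⟩ := (hE.isUnit_mul_add_one_sub hG).exists_right_inv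
  have hE' : E * E = E := hE.eq
  exact ⟨E * ξ, by linear_combination ξ * hE', by linear_combination E * hξ + ξ * hE'⟩

end IsIdempotentElem

theorem Ideal.notMem_of_one_sub_mem {R : Type*} [CommRing R] {P : Ideal R} (hP : P ≠ ⊤)
    {r a : R} (hr : 1 - r ∈ P) (hra : r ∈ Ideal.span {a}) : a ∉ P := fun ha ↦
  hP <| (P.eq_top_iff_one).mpr <| by
    simpa using P.add_mem hr ((Ideal.span_singleton_le_iff_mem P).mpr ha hra)

namespace AdicCompletion

variable {R : Type*} [CommRing R] {I : Ideal R}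

theorem map_algebraMap_le_of_isMaximal (hI : I.FG) (M : Ideal (AdicCompletion I R))
    [hM : M.IsMaximal] : I.map (algebraMap R (AdicCompletion I R)) ≤ M :=
  (isAdicComplete_self I hI).le_jacobson_bot.trans (sInf_le ⟨bot_le, hM⟩)

theorem sub_algebraMap_mem_of_isMaximal (hI : I.FG) (M : Ideal (AdicCompletion I R))
    [M.IsMaximal] {x : AdicCompletion I R} {s : R}
    (hx : eval I R 1 x = Submodule.Quotient.mk s) : x - algebraMap R _ s ∈ M := by
  have hker : x - algebraMap R _ s ∈ (eval I R 1).ker := by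
    rw [LinearMap.mem_ker, map_sub, hx]
    exact sub_self _
  rw [← pow_smul_top_eq_ker_eval hI, pow_one, Ideal.smul_top_eq_map] at hker
  exact map_algebraMap_le_of_isMaximal hI M hker

end AdicCompletion

section CompletionSetup

variable {R : Type u} [CommRing R] {φ : R ≃+* R} {z : R} {l : ℕ}

theorem isCoprime_pow_apply
    (hcop : ∀ i : ℕ, 1 ≤ i → i ≤ l - 1 → Ideal.span {z, (φ ^ i) z} = ⊤)
    {a c : ℕ} (ha : a < l) (hc : c < l) (hac : a ≠ c) :
    IsCoprime ((φ ^ a) z) ((φ ^ c) z) := by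
  wlog hlt : a < c generalizing a c
  · exact (this hc ha hac.symm (by omega)).symm
  have hbase : IsCoprime z ((φ ^ (c - a)) z) :=
    Ideal.mem_span_pair.mp ((Ideal.eq_top_iff_one _).mp (hcop (c - a) (by omega) (by omega)))
  have hshift : (φ ^ a) ((φ ^ (c - a)) z) = (φ ^ c) z := by
    rw [← RingAut.mul_apply, ← pow_add, Nat.add_sub_cancel' hlt.le]
  rw [← hshift]
  exact hbase.map ((φ ^ a : R ≃+* R) : R →+* R)

theorem pow_apply_notMem_of_one_sub_mem {P : Ideal R} (hP : P ≠ ⊤) {r : R} (hr : 1 - r ∈ P)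
    (hr2 : ∀ i : ℕ, 1 ≤ i → i ≤ l - 1 → r ∈ Ideal.span {(φ ^ i) z})
    {k : ℕ} (hk1 : 1 ≤ k) (hkl : k < l) : (φ ^ k) z ∉ P :=
  Ideal.notMem_of_one_sub_mem hP hr (hr2 k hk1 (by omega))

theorem mem_of_gwaTau_mem_of_one_sub_mem {P : Ideal R} [hP : P.IsPrime]
    (hτ : gwaTau R φ z l ∈ P) {r : R} (hr : 1 - r ∈ P)
    (hr2 : ∀ i : ℕ, 1 ≤ i → i ≤ l - 1 → r ∈ Ideal.span {(φ ^ i) z}) : z ∈ P := by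
  obtain ⟨m, hm, hmP⟩ := hP.prod_mem_iff.mp hτ
  obtain rfl | hm1 := Nat.eq_zero_or_pos m
  · simpa using hmP
  · exact absurd hmP (pow_apply_notMem_of_one_sub_mem hP.ne_top hr hr2 hm1
      (Finset.mem_range.mp hm))

theorem gwaTau_eq_prod_mul (hl : 1 ≤ l) :
    gwaTau R φ z l = (∏ i ∈ Finset.range (l - 1), (φ ^ (i + 1)) z) * z := by
  obtain ⟨l, rfl⟩ := Nat.exists_eq_add_of_le' hl
  rw [gwaTau, Finset.prod_range_succ']
  rfl

theorem pow_apply_algebraMap (φhat : RHat R φ z l ≃+* RHat R φ z l)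
    (hφhat : ∀ r : R, φhat (algebraMap R (RHat R φ z l) r) = algebraMap R (RHat R φ z l) (φ r))
    (n : ℕ) (r : R) :
    (φhat ^ n) (algebraMap R (RHat R φ z l) r) = algebraMap R (RHat R φ z l) ((φ ^ n) r) := by
  induction n with
  | zero => rfl
  | succ n ih => rw [pow_succ', RingAut.mul_apply, ih, hφhat, pow_succ', RingAut.mul_apply]

variable {e : RHat R φ z l} {r : R}

theorem one_sub_mem_comap_algebraMap (hr : RHat.proj R φ z l 1 e = Submodule.Quotient.mk r)
    (M : Ideal (RHat R φ z l)) [M.IsMaximal] (he : 1 - e ∈ M) :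
    1 - r ∈ M.comap (algebraMap R (RHat R φ z l)) := by
  simpa using M.add_mem he
    (AdicCompletion.sub_algebraMap_mem_of_isMaximal (Submodule.fg_span_singleton _) M hr)

theorem gwaTau_mem_comap_algebraMap (M : Ideal (RHat R φ z l)) [M.IsMaximal] :
    gwaTau R φ z l ∈ M.comap (algebraMap R (RHat R φ z l)) :=
  AdicCompletion.map_algebraMap_le_of_isMaximal (Submodule.fg_span_singleton _) M
    (Ideal.mem_map_of_mem _ (Ideal.mem_span_singleton_self _))

theorem algebraMap_mem_of_one_sub_mem (hr : RHat.proj R φ z l 1 e = Submodule.Quotient.mk r)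
    (hr2 : ∀ i : ℕ, 1 ≤ i → i ≤ l - 1 → r ∈ Ideal.span {(φ ^ i) z})
    (M : Ideal (RHat R φ z l)) [M.IsMaximal] (he : 1 - e ∈ M) :
    algebraMap R (RHat R φ z l) z ∈ M :=
  Ideal.mem_comap.mp <| mem_of_gwaTau_mem_of_one_sub_mem (gwaTau_mem_comap_algebraMap M)
    (one_sub_mem_comap_algebraMap hr M he) hr2

theorem pow_apply_algebraMap_notMem (φhat : RHat R φ z l ≃+* RHat R φ z l)
    (hφhat : ∀ r : R, φhat (algebraMap R (RHat R φ z l) r) = algebraMap R (RHat R φ z l) (φ r))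
    (hcop : ∀ i : ℕ, 1 ≤ i → i ≤ l - 1 → Ideal.span {z, (φ ^ i) z} = ⊤)
    (hr : RHat.proj R φ z l 1 e = Submodule.Quotient.mk r)
    (hr2 : ∀ i : ℕ, 1 ≤ i → i ≤ l - 1 → r ∈ Ideal.span {(φ ^ i) z})
    {n i : ℕ} (hn : n < l) (hi : i < l) (hin : i ≠ n)
    (M : Ideal (RHat R φ z l)) [M.IsMaximal] (he : 1 - (φhat ^ n) e ∈ M) :
    (φhat ^ i) (algebraMap R (RHat R φ z l) z) ∉ M := by
  have : (M.comap (φhat ^ n)).IsMaximal := Ideal.comap_isMaximal_of_equiv _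
  have he' : 1 - e ∈ M.comap (φhat ^ n) := by simpa [Ideal.mem_comap] using he
  have hnM : algebraMap R (RHat R φ z l) ((φ ^ n) z) ∈ M := by
    rw [← pow_apply_algebraMap φhat hφhat]
    exact algebraMap_mem_of_one_sub_mem hr hr2 _ he'
  rw [pow_apply_algebraMap φhat hφhat]
  exact Ideal.IsPrime.notMem_of_isCoprime_of_mem
    ((isCoprime_pow_apply hcop hn hi hin.symm).map (algebraMap R _)) hnM

theorem algebraMap_prod_notMem (hr : RHat.proj R φ z l 1 e = Submodule.Quotient.mk r)
    (hr2 : ∀ i : ℕ, 1 ≤ i → i ≤ l - 1 → r ∈ Ideal.span {(φ ^ i) z})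
    (M : Ideal (RHat R φ z l)) [hM : M.IsMaximal] (he : 1 - e ∈ M) :
    algebraMap R (RHat R φ z l) (∏ i ∈ Finset.range (l - 1), (φ ^ (i + 1)) z) ∉ M := by
  intro hA
  obtain ⟨k, hk, hkM⟩ := (hM.isPrime.comap (algebraMap R _)).prod_mem_iff.mp hA
  exact pow_apply_notMem_of_one_sub_mem (Ideal.comap_ne_top _ hM.ne_top)
    (one_sub_mem_comap_algebraMap hr M he) hr2 k.succ_pos
    (by have := Finset.mem_range.mp hk; omega) hkM

end CompletionSetup

theorem statement8_general (R : Type u) [CommRing R] (φ : R ≃+* R) (z : R) (l : ℕ)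
    (hl : 1 ≤ l)
    (hcop : ∀ i : ℕ, 1 ≤ i → i ≤ l - 1 → Ideal.span {z, (φ ^ i) z} = ⊤)
    (φhat : RHat R φ z l ≃+* RHat R φ z l)
    (hφhat : ∀ r : R, φhat (algebraMap R (RHat R φ z l) r) = algebraMap R (RHat R φ z l) (φ r))
    (e : RHat R φ z l) (he : e * e = e)
    (heval : ∃ r : R, RHat.proj R φ z l 1 e = Submodule.Quotient.mk r ∧
      r - 1 ∈ Ideal.span {z} ∧
      ∀ i : ℕ, 1 ≤ i → i ≤ l - 1 → r ∈ Ideal.span {(φ ^ i) z}) :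
    (∀ n i : ℕ, n < l → i < l → i ≠ n →
      ∃ w : RHat R φ z l, w * (φhat ^ n) e = w ∧
        ((φhat ^ n) e * (φhat ^ i) (algebraMap R (RHat R φ z l) z)) * w = (φhat ^ n) e) ∧
    ∃ u v : RHat R φ z l, e * u = u ∧ u * v = e ∧
      e * algebraMap R (RHat R φ z l) z =
        e * algebraMap R (RHat R φ z l) (gwaTau R φ z l) * u := by
  obtain ⟨r, hr, -, hr2⟩ := heval
  refine ⟨fun n i hn hi hin ↦ ?_, ?_⟩
  · have hE : IsIdempotentElem ((φhat ^ n) e) := by rw [IsIdempotentElem, ← map_mul, he]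
    exact hE.exists_corner_inverse fun M _ ↦
      pow_apply_algebraMap_notMem φhat hφhat hcop hr hr2 hn hi hin M
  · obtain ⟨w, hwe, hw⟩ := IsIdempotentElem.exists_corner_inverse he fun M _ ↦
      algebraMap_prod_notMem hr hr2 M
    refine ⟨w, e * algebraMap R _ (∏ i ∈ Finset.range (l - 1), (φ ^ (i + 1)) z),
      by rw [mul_comm, hwe], by linear_combination hw, ?_⟩
    have hτ := congrArg (algebraMap R (RHat R φ z l)) (gwaTau_eq_prod_mul (φ := φ) (z := z) hl)
    rw [map_mul] at hτ
    linear_combination (-algebraMap R (RHat R φ z l) z) * hw - e * w * hτ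

/-- (Standing completion setup as in the paper: `R` commutative, `φ` a ring
automorphism, `z` a non-zero-divisor, `b` nilpotent, `l ≥ 1`, `φ^l(z) − z ∈ bR`, and
`(z, φ^i(z)) = R` for `1 ≤ i ≤ l−1`; `R̂` is the `(τ)`-adic completion of `R` where
`τ = z·φ(z)⋯φ^{l−1}(z)`; `φ̂` is the induced (continuous) automorphism of `R̂` extending `φ`;
`e ∈ R̂` is the idempotent lifting the CRT idempotent of `R/(τ)` corresponding to the
projection onto `R/(z)`.)

Then for `0 ≤ n < l` and `0 ≤ i < l` with `i ≠ n`, the element `φ̂ⁿ(e)·φ̂ⁱ(z)` is a unit of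
the corner ring `φ̂ⁿ(e)·R̂` (whose identity element is `φ̂ⁿ(e)`).  In particular, there is a
unit `u` of `e·R̂` such that `e·z = (e·τ)·u`. -/
theorem statement8 (R : Type u) [CommRing R] (φ : R ≃+* R) (z b : R) (l : ℕ)
    (hz : z ∈ nonZeroDivisors R) (hb : IsNilpotent b) (hl : 1 ≤ l)
    (hφl : ∃ r : R, (φ ^ l) z - z = b * r)
    (hcop : ∀ i : ℕ, 1 ≤ i → i ≤ l - 1 → Ideal.span {z, (φ ^ i) z} = ⊤)
    (φhat : RHat R φ z l ≃+* RHat R φ z l)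
    (hφhat : ∀ r : R, φhat (algebraMap R (RHat R φ z l) r) = algebraMap R (RHat R φ z l) (φ r))
    (hφcont : ∀ n : ℕ, ∃ m : ℕ, ∀ x : RHat R φ z l,
      RHat.proj R φ z l m x = 0 → RHat.proj R φ z l n (φhat x) = 0)
    (e : RHat R φ z l) (he : e * e = e)
    (heval : ∃ r : R, RHat.proj R φ z l 1 e = Submodule.Quotient.mk r ∧
      r - 1 ∈ Ideal.span {z} ∧
      ∀ i : ℕ, 1 ≤ i → i ≤ l - 1 → r ∈ Ideal.span {(φ ^ i) z}) :
    (∀ n i : ℕ, n < l → i < l → i ≠ n →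
      ∃ w : RHat R φ z l, w * (φhat ^ n) e = w ∧
        ((φhat ^ n) e * (φhat ^ i) (algebraMap R (RHat R φ z l) z)) * w = (φhat ^ n) e) ∧
    ∃ u v : RHat R φ z l, e * u = u ∧ u * v = e ∧
      e * algebraMap R (RHat R φ z l) z =
        e * algebraMap R (RHat R φ z l) (gwaTau R φ z l) * u :=
  statement8_general R φ z l hl hcop φhat hφhat e he heval
end

section
/- With notation as in the standing completion setup: the elements e, φ̂(e), …, φ̂^{l−1}(e) of R̂ form a complete orthogonal family of idempotents, that is, φ̂ⁱ(e)·φ̂ʲ(e) = 0 for all 0 ≤ i ≠ j ≤ l−1 and e + φ̂(e) + ⋯ + φ̂^{l−1}(e) = 1. -/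
/-!
Both claims say that certain idempotents of `R̂` vanish: `φ̂ⁱ(e)·φ̂ʲ(e)` for `i ≠ j`, and
`1 - ∑ φ̂ⁱ(e)` once orthogonality is known. An idempotent of `R̂` whose image in every `R/(τⁿ)` is
nilpotent is zero, and by continuity of `φ̂` the image of `φ̂ⁱ(e)` in `R/(τⁿ)` is `φⁱ(a)` for some
`a ≡ e (mod τ)`. Nilpotence modulo `τ` is checked prime by prime: a prime `P ∋ τ` contains some
`φᵏ(z)` with `k < l`, hence also `φ^{k+l}(z)` because `φˡ(z) - z` is nilpotent. Since
`a ∈ (φᵈ z)` for `0 < d < l`, this forces `φⁱ(a) ∈ P` for `i ≠ k`, while `φᵏ(a) ≡ 1 (mod P)`.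
-/

universe u

namespace AdicCompletion

variable {R : Type*} [CommRing R] {I : Ideal R}

theorem eval_one (n : ℕ) : eval I R n 1 = 1 := rfl

theorem eval_mul (n : ℕ) (x y : AdicCompletion I R) :
    eval I R n (x * y) = eval I R n x * eval I R n y := rfl

theorem eval_eq_zero_of_le {m n : ℕ} (hmn : m ≤ n) {x : AdicCompletion I R}
    (hx : eval I R n x = 0) : eval I R m x = 0 := by
  rw [eval_apply, ← transitionMap_comp_eval_apply I R hmn, ← eval_apply, hx, LinearMap.map_zero]

theorem eq_zero_of_isIdempotentElem_of_eval_mem_radical {x : AdicCompletion I R}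
    (hx : IsIdempotentElem x)
    (h : ∀ n, ∃ s ∈ I.radical, eval I R n x = Submodule.Quotient.mk s) : x = 0 := by
  ext n
  obtain ⟨s, hs, hxs⟩ := h n
  obtain ⟨N, hN⟩ : s ∈ (I ^ n).radical := by
    rcases n with _ | n
    · exact Ideal.le_radical (by simp)
    · rwa [Ideal.radical_pow _ n.succ_ne_zero]
  rw [← hx.pow_succ_eq N]
  change eval I R n x ^ (N + 1) = 0
  rw [hxs]
  change Ideal.Quotient.mk _ (s ^ (N + 1)) = 0
  rw [Ideal.Quotient.eq_zero_iff_mem, pow_succ]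
  exact Ideal.mul_mem_right _ _ (by simpa using hN)

theorem completeOrthogonalIdempotents_of_eval_mem_radical {ι : Type*} [Fintype ι]
    {f : ι → AdicCompletion I R} (hf : ∀ i, IsIdempotentElem (f i))
    (hs : ∀ n, ∃ s : ι → R, (∀ i, eval I R n (f i) = Submodule.Quotient.mk (s i)) ∧
      (∀ i j, i ≠ j → s i * s j ∈ I.radical) ∧ 1 - ∑ i, s i ∈ I.radical) :
    CompleteOrthogonalIdempotents f := by
  have hortho : OrthogonalIdempotents f := by
    refine ⟨hf, fun i j hij => eq_zero_of_isIdempotentElem_of_eval_mem_radical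
      ((hf i).mul (hf j)) fun n => ?_⟩
    obtain ⟨s, hfs, hmul, -⟩ := hs n
    exact ⟨_, hmul i j hij, by rw [eval_mul, hfs, hfs]; rfl⟩
  refine ⟨hortho, ?_⟩
  rw [← sub_eq_zero, ← neg_sub, neg_eq_zero]
  refine eq_zero_of_isIdempotentElem_of_eval_mem_radical
    hortho.isIdempotentElem_sum.one_sub fun n => ?_
  obtain ⟨s, hfs, -, hsum⟩ := hs n
  refine ⟨_, hsum, ?_⟩
  simp only [map_sub, map_sum, eval_one, hfs]
  change _ = Ideal.Quotient.mk _ _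
  rw [map_sub, map_one, map_sum]
  rfl

variable {f : AdicCompletion I R ≃+* AdicCompletion I R}

theorem exists_eval_pow_apply_eq_zero
    (hf : ∀ n, ∃ m, ∀ x, eval I R m x = 0 → eval I R n (f x) = 0) (k n : ℕ) :
    ∃ m, ∀ x, eval I R m x = 0 → eval I R n ((f ^ k) x) = 0 := by
  induction k generalizing n with
  | zero => exact ⟨n, fun x hx => hx⟩
  | succ k ih =>
    obtain ⟨m₁, hm₁⟩ := ih n
    obtain ⟨m₂, hm₂⟩ := hf m₁
    exact ⟨m₂, fun x hx => by rw [pow_succ, RingAut.mul_apply]; exact hm₁ _ (hm₂ x hx)⟩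

theorem pow_apply_algebraMap {φ : R ≃+* R}
    (hfφ : ∀ r, f (algebraMap R _ r) = algebraMap R _ (φ r)) (k : ℕ) (r : R) :
    (f ^ k) (algebraMap R _ r) = algebraMap R _ ((φ ^ k) r) := by
  induction k with
  | zero => rfl
  | succ k ih => rw [pow_succ', RingAut.mul_apply, ih, hfφ, ← RingAut.mul_apply, ← pow_succ']

theorem exists_eval_pow_apply_eq_mk {φ : R ≃+* R}
    (hf : ∀ n, ∃ m, ∀ x, eval I R m x = 0 → eval I R n (f x) = 0)
    (hfφ : ∀ r, f (algebraMap R _ r) = algebraMap R _ (φ r)) (x : AdicCompletion I R) (k n : ℕ) :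
    ∃ a : R, eval I R 1 x = Submodule.Quotient.mk a ∧
      eval I R n ((f ^ k) x) = Submodule.Quotient.mk ((φ ^ k) a) := by
  obtain ⟨m, hm⟩ := exists_eval_pow_apply_eq_zero hf k n
  obtain ⟨a, ha⟩ := Submodule.Quotient.mk_surjective _ (eval I R (max m 1) x)
  have hlift : eval I R (max m 1) (x - algebraMap R _ a) = 0 := by
    rw [map_sub, ← ha, sub_eq_zero]
    rfl
  refine ⟨a, ?_, ?_⟩
  · rw [← sub_eq_zero]
    exact eval_eq_zero_of_le (le_max_right m 1) hlift
  · have := hm _ (eval_eq_zero_of_le (le_max_left m 1) hlift)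
    rwa [map_sub, pow_apply_algebraMap hfφ, map_sub, sub_eq_zero] at this

end AdicCompletion

section CRTIdempotent

variable {R : Type u} [CommRing R] {φ : R ≃+* R} {z : R} {l : ℕ}

/-- `a` represents, modulo `τ`, the idempotent of the factor `R/(z)` of
`R/(τ) ≅ R/(z) × R/(φ z) × ⋯ × R/(φ^{l-1} z)`. -/
def LiftsFirstFactorIdempotent (φ : R ≃+* R) (z : R) (l : ℕ) (a : R) : Prop :=
  a - 1 ∈ Ideal.span {z} ∧ ∀ i, 1 ≤ i → i ≤ l - 1 → a ∈ Ideal.span {(φ ^ i) z}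

theorem span_gwaTau_le {k : ℕ} (hk : k < l) :
    Ideal.span {gwaTau R φ z l} ≤ Ideal.span {(φ ^ k) z} :=
  Ideal.span_singleton_le_span_singleton.mpr
    (Finset.dvd_prod_of_mem _ (Finset.mem_range.mpr hk))

theorem exists_map_pow_mem_of_gwaTau_mem {P : Ideal R} [P.IsPrime]
    (hP : gwaTau R φ z l ∈ P) : ∃ k < l, (φ ^ k) z ∈ P := by
  simpa using Ideal.IsPrime.prod_mem_iff.mp hP

theorem map_pow_add_mem_of_mem {P : Ideal R} [P.IsPrime] (hnil : IsNilpotent ((φ ^ l) z - z))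
    {k : ℕ} (hk : (φ ^ k) z ∈ P) : (φ ^ (k + l)) z ∈ P := by
  have hdiff : (φ ^ (k + l)) z - (φ ^ k) z ∈ P := by
    rw [pow_add, RingAut.mul_apply, ← map_sub]
    exact nilradical_le_prime P (mem_nilradical.mpr (hnil.map (φ ^ k)))
  simpa using P.add_mem hdiff hk

namespace LiftsFirstFactorIdempotent

variable {a r : R}

theorem of_sub_mem (hr : LiftsFirstFactorIdempotent φ z l r) (hl : 1 ≤ l)
    (har : a - r ∈ Ideal.span {gwaTau R φ z l}) : LiftsFirstFactorIdempotent φ z l a := by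
  refine ⟨?_, fun i hi1 hil => ?_⟩
  · have : a - r ∈ Ideal.span {z} := span_gwaTau_le (k := 0) hl har
    simpa using Ideal.add_mem _ this hr.1
  · have : a - r ∈ Ideal.span {(φ ^ i) z} := span_gwaTau_le (φ := φ) (k := i) (by omega) har
    simpa using Ideal.add_mem _ this (hr.2 i hi1 hil)

theorem map_pow_mem (ha : LiftsFirstFactorIdempotent φ z l a)
    (hnil : IsNilpotent ((φ ^ l) z - z)) {P : Ideal R} [P.IsPrime] {i k : ℕ} (hi : i < l)
    (hk : k < l) (hik : i ≠ k) (hkP : (φ ^ k) z ∈ P) : (φ ^ i) a ∈ P := by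
  -- `φⁱ a ∈ (φ^{i+d} z)` for `0 < d < l`, and `i + d` runs through `k` or `k + l`.
  have hshift : ∀ d, 1 ≤ d → d ≤ l - 1 → (φ ^ (i + d)) z ∈ P → (φ ^ i) a ∈ P := by
    intro d hd1 hdl hP
    obtain ⟨c, hc⟩ := Ideal.mem_span_singleton'.mp (ha.2 d hd1 hdl)
    rw [pow_add, RingAut.mul_apply] at hP
    rw [← hc, map_mul]
    exact P.mul_mem_left _ hP
  rcases lt_or_gt_of_ne hik with h | h
  · exact hshift (k - i) (by omega) (by omega) (by rwa [Nat.add_sub_cancel' h.le])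
  · exact hshift (k + l - i) (by omega) (by omega)
      (by rw [show i + (k + l - i) = k + l by omega]; exact map_pow_add_mem_of_mem hnil hkP)

theorem map_pow_sub_one_mem (ha : LiftsFirstFactorIdempotent φ z l a) (k : ℕ) :
    (φ ^ k) a - 1 ∈ Ideal.span {(φ ^ k) z} := by
  obtain ⟨c, hc⟩ := Ideal.mem_span_singleton'.mp ha.1
  rw [← map_one (φ ^ k), ← map_sub, ← hc, map_mul]
  exact Ideal.mul_mem_left _ _ (Ideal.mem_span_singleton_self _)

end LiftsFirstFactorIdempotent

theorem map_pow_mul_map_pow_mem_radical {a a' : R} (ha : LiftsFirstFactorIdempotent φ z l a)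
    (ha' : LiftsFirstFactorIdempotent φ z l a') (hnil : IsNilpotent ((φ ^ l) z - z))
    {i j : ℕ} (hi : i < l) (hj : j < l) (hij : i ≠ j) :
    (φ ^ i) a * (φ ^ j) a' ∈ (Ideal.span {gwaTau R φ z l}).radical := by
  rw [Ideal.radical_eq_sInf, Submodule.mem_sInf]
  rintro P ⟨hτ, hP⟩
  obtain ⟨k, hk, hkP⟩ := exists_map_pow_mem_of_gwaTau_mem (hτ (Ideal.mem_span_singleton_self _))
  by_cases hik : i = k
  · subst hik
    exact Ideal.mul_mem_left P _ (ha'.map_pow_mem hnil hj hi (Ne.symm hij) hkP)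
  · exact Ideal.mul_mem_right _ P (ha.map_pow_mem hnil hi hk hik hkP)

theorem one_sub_sum_map_pow_mem_radical {a : ℕ → R}
    (ha : ∀ i, LiftsFirstFactorIdempotent φ z l (a i)) (hnil : IsNilpotent ((φ ^ l) z - z)) :
    1 - ∑ i ∈ Finset.range l, (φ ^ i) (a i) ∈ (Ideal.span {gwaTau R φ z l}).radical := by
  rw [Ideal.radical_eq_sInf, Submodule.mem_sInf]
  rintro P ⟨hτ, hP⟩
  obtain ⟨k, hk, hkP⟩ := exists_map_pow_mem_of_gwaTau_mem (hτ (Ideal.mem_span_singleton_self _))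
  rw [← Finset.add_sum_erase _ _ (Finset.mem_range.mpr hk), ← sub_sub]
  refine P.sub_mem ?_ (P.sum_mem fun i hi => ?_)
  · rw [← neg_sub]
    exact P.neg_mem ((Ideal.span_singleton_le_iff_mem P).mpr hkP ((ha k).map_pow_sub_one_mem k))
  · obtain ⟨hik, hi⟩ := Finset.mem_erase.mp hi
    exact (ha i).map_pow_mem hnil (Finset.mem_range.mp hi) hk hik hkP

end CRTIdempotent

theorem statement9_general (R : Type u) [CommRing R] (φ : R ≃+* R) (z b : R) (l : ℕ)
    (hb : IsNilpotent b) (hl : 1 ≤ l)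
    (hφl : ∃ r : R, (φ ^ l) z - z = b * r)
    (φhat : RHat R φ z l ≃+* RHat R φ z l)
    (hφhat : ∀ r : R, φhat (algebraMap R (RHat R φ z l) r) = algebraMap R (RHat R φ z l) (φ r))
    (hφcont : ∀ n : ℕ, ∃ m : ℕ, ∀ x : RHat R φ z l,
      RHat.proj R φ z l m x = 0 → RHat.proj R φ z l n (φhat x) = 0)
    (e : RHat R φ z l) (he : e * e = e)
    (heval : ∃ r : R, RHat.proj R φ z l 1 e = Submodule.Quotient.mk r ∧
      r - 1 ∈ Ideal.span {z} ∧
      ∀ i : ℕ, 1 ≤ i → i ≤ l - 1 → r ∈ Ideal.span {(φ ^ i) z}) :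
    (∀ i j : ℕ, i < l → j < l → i ≠ j → (φhat ^ i) e * (φhat ^ j) e = 0) ∧
    (∑ i ∈ Finset.range l, (φhat ^ i) e) = 1 := by
  obtain ⟨r, hr1, hr⟩ := heval
  have hnil : IsNilpotent ((φ ^ l) z - z) := by
    obtain ⟨c, hc⟩ := hφl
    exact hc ▸ (Commute.all b c).isNilpotent_mul_right hb
  have hrep : ∀ i n, ∃ a, LiftsFirstFactorIdempotent φ z l a ∧
      AdicCompletion.eval _ R n ((φhat ^ i) e) = Submodule.Quotient.mk ((φ ^ i) a) := by
    intro i n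
    obtain ⟨a, ha1, han⟩ := AdicCompletion.exists_eval_pow_apply_eq_mk hφcont hφhat e i n
    refine ⟨a, LiftsFirstFactorIdempotent.of_sub_mem hr hl ?_, han⟩
    simpa using (Submodule.Quotient.eq _).mp (ha1.symm.trans hr1)
  have hcoi : CompleteOrthogonalIdempotents fun i : Fin l => (φhat ^ (i : ℕ)) e := by
    refine AdicCompletion.completeOrthogonalIdempotents_of_eval_mem_radical
      (fun i => IsIdempotentElem.map he _) fun n => ?_
    choose a ha han using fun i => hrep i n
    refine ⟨fun i => (φ ^ (i : ℕ)) (a i), fun i => han i, fun i j hij =>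
      map_pow_mul_map_pow_mem_radical (ha i) (ha j) hnil i.2 j.2 (Fin.val_ne_of_ne hij), ?_⟩
    rw [Fin.sum_univ_eq_sum_range (fun i => (φ ^ i) (a i))]
    exact one_sub_sum_map_pow_mem_radical ha hnil
  refine ⟨fun i j hi hj hij => hcoi.ortho (i := ⟨i, hi⟩) (j := ⟨j, hj⟩) (Fin.ne_of_val_ne hij), ?_⟩
  rw [← Fin.sum_univ_eq_sum_range]
  exact hcoi.complete

/-- (Standing completion setup: `R` commutative, `φ` a ring automorphism,
`z` a non-zero-divisor, `b` nilpotent, `l ≥ 1`, `φ^l(z) − z ∈ bR`, and `(z, φ^i(z)) = R` for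
`1 ≤ i ≤ l−1`; `R̂` is the `(τ)`-adic completion of `R` where `τ = z·φ(z)⋯φ^{l−1}(z)`; `φ̂` is
the induced automorphism of `R̂`, i.e. the continuous automorphism extending `φ`; `e ∈ R̂` is
the unique idempotent whose image in `R/(τ)` corresponds to the projection onto `R/(z)` under
the Chinese remainder isomorphism, i.e. `e ≡ 1 mod (z)` and `e ≡ 0 mod (φ^i(z))` for
`1 ≤ i ≤ l−1`.)

Then `e, φ̂(e), …, φ̂^{l−1}(e)` form a complete orthogonal family of idempotents:
`φ̂ⁱ(e)·φ̂ʲ(e) = 0` for `0 ≤ i ≠ j ≤ l−1`, and `e + φ̂(e) + ⋯ + φ̂^{l−1}(e) = 1`. -/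
theorem statement9 (R : Type u) [CommRing R] (φ : R ≃+* R) (z b : R) (l : ℕ)
    (hz : z ∈ nonZeroDivisors R) (hb : IsNilpotent b) (hl : 1 ≤ l)
    (hφl : ∃ r : R, (φ ^ l) z - z = b * r)
    (hcop : ∀ i : ℕ, 1 ≤ i → i ≤ l - 1 → Ideal.span {z, (φ ^ i) z} = ⊤)
    (φhat : RHat R φ z l ≃+* RHat R φ z l)
    (hφhat : ∀ r : R, φhat (algebraMap R (RHat R φ z l) r) = algebraMap R (RHat R φ z l) (φ r))
    (hφcont : ∀ n : ℕ, ∃ m : ℕ, ∀ x : RHat R φ z l,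
      RHat.proj R φ z l m x = 0 → RHat.proj R φ z l n (φhat x) = 0)
    (e : RHat R φ z l) (he : e * e = e)
    (heval : ∃ r : R, RHat.proj R φ z l 1 e = Submodule.Quotient.mk r ∧
      r - 1 ∈ Ideal.span {z} ∧
      ∀ i : ℕ, 1 ≤ i → i ≤ l - 1 → r ∈ Ideal.span {(φ ^ i) z}) :
    (∀ i j : ℕ, i < l → j < l → i ≠ j → (φhat ^ i) e * (φhat ^ j) e = 0) ∧
    (∑ i ∈ Finset.range l, (φhat ^ i) e) = 1 :=
  statement9_general R φ z b l hb hl hφl φhat hφhat hφcont e he heval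
end

section
/- With notation as in the standing completion setup, let Ĥ = H(R̂, φ̂, z) be the generalized Weyl algebra over R̂ (with z denoting its image in R̂). Then the two-sided ideal of Ĥ generated by the idempotent e is all of Ĥ: Ĥ·e·Ĥ = Ĥ. -/
/-!
Conjugating `e` by powers of the generators gives `yᵏ·e·xᵏ = φ̂ᵏ(e)·πₖ` with
`πₖ = z·φ̂(z)⋯φ̂ᵏ⁻¹(z)`, so the two-sided ideal generated by `e` contains
`s = ∑_{k<l} φ̂ᵏ(e)·πₖ`. Modulo `φ̂ⁱ(z)` (`i < l`) the terms with `k < i` vanish because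
`e ≡ 0 mod φ̂ⁱ⁻ᵏ(z)`, those with `k > i` because `φ̂ⁱ(z) ∣ πₖ`, and the term `k = i` is `≡ πᵢ`,
which is coprime to `φ̂ⁱ(z)`. Hence `s` is coprime to `τ = π_l`, and as `τ` lies in the Jacobson
radical of the `τ`-adically complete ring `R̂`, `s` is a unit.
-/

universe u
open Finset

lemma pow_apply_pow_apply {S : Type*} [CommRing S] (ψ : S ≃+* S) (i j : ℕ) (s : S) :
    (ψ ^ i) ((ψ ^ j) s) = (ψ ^ (i + j)) s := by
  rw [pow_add, RingAut.mul_apply]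

lemma pow_apply_map_of_intertwines {S T : Type*} [CommRing S] [CommRing T] (f : S →+* T)
    (ψ : S ≃+* S) (ψ' : T ≃+* T) (hf : ∀ s, ψ' (f s) = f (ψ s)) (j : ℕ) (s : S) :
    (ψ' ^ j) (f s) = f ((ψ ^ j) s) := by
  induction j generalizing s with
  | zero => rfl
  | succ j ih => rw [pow_succ, RingAut.mul_apply, hf, ih, pow_succ, RingAut.mul_apply]

lemma isUnit_of_isCoprime_of_mem_jacobson_bot {S : Type*} [CommRing S] {a t : S}
    (h : IsCoprime a t) (ht : t ∈ (⊥ : Ideal S).jacobson) : IsUnit a := by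
  obtain ⟨u, v, huv⟩ := h
  have : IsUnit (t * -v + 1) := Ideal.mem_jacobson_bot.mp ht (-v)
  rw [show t * -v + 1 = u * a by linear_combination -huv] at this
  exact isUnit_of_mul_isUnit_right this

section OrbitProd

variable {S : Type*} [CommRing S] (ψ : S ≃+* S) (w : S)

def orbitProd (k : ℕ) : S := ∏ j ∈ range k, (ψ ^ j) w

lemma orbitProd_succ (k : ℕ) : orbitProd ψ w (k + 1) = orbitProd ψ w k * (ψ ^ k) w :=
  prod_range_succ _ k

lemma pow_apply_dvd_orbitProd {i k : ℕ} (h : i < k) : (ψ ^ i) w ∣ orbitProd ψ w k :=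
  dvd_prod_of_mem _ (mem_range.mpr h)

lemma map_orbitProd {T : Type*} [CommRing T] (f : S →+* T) (ψ' : T ≃+* T)
    (hf : ∀ s, ψ' (f s) = f (ψ s)) (k : ℕ) :
    orbitProd ψ' (f w) k = f (orbitProd ψ w k) := by
  simp only [orbitProd, map_prod, pow_apply_map_of_intertwines f ψ ψ' hf]

variable {ψ w} {l : ℕ}

lemma isCoprime_pow_apply_of_lt (hcop : ∀ i, 1 ≤ i → i < l → IsCoprime w ((ψ ^ i) w))
    {j i : ℕ} (hji : j < i) (hil : i < l) : IsCoprime ((ψ ^ j) w) ((ψ ^ i) w) := by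
  have := (hcop (i - j) (by omega) (by omega)).map ((ψ ^ j : S ≃+* S) : S →+* S)
  rwa [RingHom.coe_coe, pow_apply_pow_apply, Nat.add_sub_cancel' hji.le] at this

lemma isCoprime_orbitProd_pow_apply (hcop : ∀ i, 1 ≤ i → i < l → IsCoprime w ((ψ ^ i) w))
    {i : ℕ} (hil : i < l) : IsCoprime (orbitProd ψ w i) ((ψ ^ i) w) :=
  IsCoprime.prod_left fun _ hj => isCoprime_pow_apply_of_lt hcop (mem_range.mp hj) hil

variable {e : S}

lemma isCoprime_sum_pow_apply_mul_orbitProd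
    (hcop : ∀ i, 1 ≤ i → i < l → IsCoprime w ((ψ ^ i) w))
    (he₁ : w ∣ e - 1) (he₀ : ∀ i, 1 ≤ i → i < l → (ψ ^ i) w ∣ e) {i : ℕ} (hil : i < l) :
    IsCoprime (∑ k ∈ range l, (ψ ^ k) e * orbitProd ψ w k) ((ψ ^ i) w) := by
  have hdvd : ∀ k ∈ range l,
      (ψ ^ i) w ∣ (ψ ^ k) e * orbitProd ψ w k - if k = i then orbitProd ψ w i else 0 := by
    intro k hk
    rcases lt_trichotomy k i with hki | rfl | hik
    · have := map_dvd (ψ ^ k) (he₀ (i - k) (by omega) (by omega))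
      rw [pow_apply_pow_apply, Nat.add_sub_cancel' hki.le] at this
      rw [if_neg hki.ne, sub_zero]
      exact this.mul_right _
    · rw [if_pos rfl, ← sub_one_mul, ← map_one (ψ ^ k), ← map_sub]
      exact (map_dvd (ψ ^ k) he₁).mul_right _
    · rw [if_neg hik.ne', sub_zero]
      exact (pow_apply_dvd_orbitProd ψ w hik).mul_left _
  obtain ⟨c, hc⟩ := dvd_sum hdvd
  rw [sum_sub_distrib, sum_ite_eq', if_pos (mem_range.mpr hil), sub_eq_iff_eq_add'] at hc
  rw [hc]
  exact (isCoprime_orbitProd_pow_apply hcop hil).add_mul_left_left c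

lemma isCoprime_sum_orbitProd (hcop : ∀ i, 1 ≤ i → i < l → IsCoprime w ((ψ ^ i) w))
    (he₁ : w ∣ e - 1) (he₀ : ∀ i, 1 ≤ i → i < l → (ψ ^ i) w ∣ e) :
    IsCoprime (∑ k ∈ range l, (ψ ^ k) e * orbitProd ψ w k) (orbitProd ψ w l) :=
  IsCoprime.prod_right fun _ hi =>
    isCoprime_sum_pow_apply_mul_orbitProd hcop he₁ he₀ (mem_range.mp hi)

end OrbitProd

namespace AdicCompletion

variable {R : Type*} [CommRing R] {I : Ideal R}

lemma algebraMap_mem_jacobson_bot (hI : I.FG) {r : R} (hr : r ∈ I) :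
    algebraMap R (AdicCompletion I R) r ∈ (⊥ : Ideal (AdicCompletion I R)).jacobson :=
  haveI := isAdicComplete_self I hI
  IsAdicComplete.le_jacobson_bot _ (Ideal.mem_map_of_mem _ hr)

lemma sub_algebraMap_mem_map_of_eval_one_eq (hI : I.FG) {x : AdicCompletion I R} {r : R}
    (h : eval I R 1 x = Submodule.Quotient.mk r) :
    x - algebraMap R _ r ∈ I.map (algebraMap R (AdicCompletion I R)) := by
  rw [← ker_evalOneₐ_eq_map I hI, RingHom.mem_ker, map_sub, sub_eq_zero]
  change evalOneₐ I x = evalOneₐ I (of I R r)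
  rw [evalOneₐ_of, ← factorₐ_evalₐ_one, ← factor_eval_eq_evalₐ I x (by simp), h]
  rfl

end AdicCompletion

namespace GWA

variable {S : Type u} [CommRing S] (ψ : S ≃+* S) (w : S)

local notation "B" => ofBase S ψ w
local notation "𝐗" => X S ψ w
local notation "𝐘" => Y S ψ w

lemma Y_mul_X_s10 : 𝐘 * 𝐗 = B w := by
  have h := RingQuot.mkRingHom_rel (GWARel.yx (R := S) (φ := ψ) (z := w))
  rwa [map_mul] at h

lemma Y_mul_ofBase_s10 (r : S) : 𝐘 * B r = B (ψ r) * 𝐘 := by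
  have h := RingQuot.mkRingHom_rel (GWARel.yr (R := S) (φ := ψ) (z := w) r)
  rwa [map_mul, map_mul] at h

lemma Y_pow_mul_ofBase (k : ℕ) (r : S) : 𝐘 ^ k * B r = B ((ψ ^ k) r) * 𝐘 ^ k := by
  induction k generalizing r with
  | zero => simp
  | succ k ih =>
    rw [pow_succ, mul_assoc, Y_mul_ofBase_s10, ← mul_assoc, ih, mul_assoc, pow_succ,
      RingAut.mul_apply]

lemma Y_pow_mul_X_pow (k : ℕ) : 𝐘 ^ k * 𝐗 ^ k = B (orbitProd ψ w k) := by
  induction k with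
  | zero => simp [orbitProd]
  | succ k ih =>
    calc 𝐘 ^ (k + 1) * 𝐗 ^ (k + 1) = 𝐘 ^ k * (𝐘 * 𝐗) * 𝐗 ^ k := by
          rw [pow_succ, pow_succ', mul_assoc, mul_assoc, mul_assoc]
      _ = B (orbitProd ψ w (k + 1)) := by
          rw [Y_mul_X_s10, Y_pow_mul_ofBase, mul_assoc, ih, ← map_mul, orbitProd_succ, mul_comm]

lemma Y_pow_mul_ofBase_mul_X_pow (k : ℕ) (r : S) :
    𝐘 ^ k * B r * 𝐗 ^ k = B ((ψ ^ k) r * orbitProd ψ w k) := by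
  rw [Y_pow_mul_ofBase, mul_assoc, Y_pow_mul_X_pow, ← map_mul]

theorem exists_sum_mul_ofBase_mul_eq_one {l : ℕ} {e : S}
    (h : IsUnit (∑ k ∈ range l, (ψ ^ k) e * orbitProd ψ w k)) :
    ∃ (n : ℕ) (a c : Fin n → GWA S ψ w), ∑ i : Fin n, a i * B e * c i = 1 := by
  obtain ⟨v, hv⟩ := h.exists_left_inv
  refine ⟨l, fun i => B v * 𝐘 ^ (i : ℕ), fun i => 𝐗 ^ (i : ℕ), ?_⟩
  simp_rw [mul_assoc (B v), Y_pow_mul_ofBase_mul_X_pow, ← mul_sum, ← map_sum,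
    Fin.sum_univ_eq_sum_range (fun k => (ψ ^ k) e * orbitProd ψ w k), ← map_mul, hv, map_one]

end GWA

theorem statement10_general (R : Type u) [CommRing R] (φ : R ≃+* R) (z : R) (l : ℕ)
    (hl : 1 ≤ l)
    (hcop : ∀ i : ℕ, 1 ≤ i → i ≤ l - 1 → Ideal.span {z, (φ ^ i) z} = ⊤)
    (φhat : RHat R φ z l ≃+* RHat R φ z l)
    (hφhat : ∀ r : R, φhat (algebraMap R (RHat R φ z l) r) = algebraMap R (RHat R φ z l) (φ r))
    (e : RHat R φ z l)
    (heval : ∃ r : R, RHat.proj R φ z l 1 e = Submodule.Quotient.mk r ∧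
      r - 1 ∈ Ideal.span {z} ∧
      ∀ i : ℕ, 1 ≤ i → i ≤ l - 1 → r ∈ Ideal.span {(φ ^ i) z}) :
    ∃ (n : ℕ)
      (a c : Fin n → GWA (RHat R φ z l) φhat (algebraMap R (RHat R φ z l) z)),
      ∑ i : Fin n, a i *
        GWA.ofBase (RHat R φ z l) φhat (algebraMap R (RHat R φ z l) z) e * c i = 1 := by
  set A := algebraMap R (RHat R φ z l)
  have hpow := pow_apply_map_of_intertwines A φ φhat hφhat
  obtain ⟨r, hr, hr₁, hr₀⟩ := heval
  have hτ : A (gwaTau R φ z l) ∣ e - A r := by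
    have := AdicCompletion.sub_algebraMap_mem_map_of_eval_one_eq
      (Submodule.fg_span_singleton _) hr
    rwa [Ideal.map_span, Set.image_singleton, Ideal.mem_span_singleton] at this
  have hdvdτ : ∀ i < l, A ((φ ^ i) z) ∣ e - A r := fun i hi =>
    (map_dvd A (pow_apply_dvd_orbitProd φ z hi)).trans hτ
  refine GWA.exists_sum_mul_ofBase_mul_eq_one φhat (A z) (l := l)
    (isUnit_of_isCoprime_of_mem_jacobson_bot (isCoprime_sum_orbitProd ?_ ?_ ?_) ?_)
  · intro i hi hil
    have h := hcop i hi (by omega)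
    rw [Ideal.span_insert, ← Ideal.isCoprime_iff_sup_eq, Ideal.isCoprime_span_singleton_iff] at h
    rw [hpow]
    exact h.map A
  · rw [← sub_add_sub_cancel e (A r) 1, ← map_one A, ← map_sub]
    exact dvd_add (hdvdτ 0 hl) (map_dvd A (Ideal.mem_span_singleton.mp hr₁))
  · intro i hi hil
    rw [hpow, ← sub_add_cancel e (A r)]
    exact dvd_add (hdvdτ i hil) (map_dvd A (Ideal.mem_span_singleton.mp (hr₀ i hi (by omega))))
  · rw [map_orbitProd φ z A φhat hφhat]
    exact AdicCompletion.algebraMap_mem_jacobson_bot (Submodule.fg_span_singleton _)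
      (Ideal.mem_span_singleton_self _)

/-- (Standing completion setup; `Ĥ = H(R̂, φ̂, z)` is the generalized Weyl
algebra over the `(τ)`-adic completion `R̂`, with `z` denoting its image in `R̂`.)  The
two-sided ideal of `Ĥ` generated by the idempotent `e` is all of `Ĥ`:  `Ĥ·e·Ĥ = Ĥ`, i.e.
`1` is a finite sum of elements `aᵢ·e·bᵢ` with `aᵢ, bᵢ ∈ Ĥ`. -/
theorem statement10 (R : Type u) [CommRing R] (φ : R ≃+* R) (z b : R) (l : ℕ)
    (hz : z ∈ nonZeroDivisors R) (hb : IsNilpotent b) (hl : 1 ≤ l)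
    (hφl : ∃ r : R, (φ ^ l) z - z = b * r)
    (hcop : ∀ i : ℕ, 1 ≤ i → i ≤ l - 1 → Ideal.span {z, (φ ^ i) z} = ⊤)
    (φhat : RHat R φ z l ≃+* RHat R φ z l)
    (hφhat : ∀ r : R, φhat (algebraMap R (RHat R φ z l) r) = algebraMap R (RHat R φ z l) (φ r))
    (hφcont : ∀ n : ℕ, ∃ m : ℕ, ∀ x : RHat R φ z l,
      RHat.proj R φ z l m x = 0 → RHat.proj R φ z l n (φhat x) = 0)
    (e : RHat R φ z l) (he : e * e = e)
    (heval : ∃ r : R, RHat.proj R φ z l 1 e = Submodule.Quotient.mk r ∧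
      r - 1 ∈ Ideal.span {z} ∧
      ∀ i : ℕ, 1 ≤ i → i ≤ l - 1 → r ∈ Ideal.span {(φ ^ i) z}) :
    ∃ (n : ℕ)
      (a c : Fin n → GWA (RHat R φ z l) φhat (algebraMap R (RHat R φ z l) z)),
      ∑ i : Fin n, a i *
        GWA.ofBase (RHat R φ z l) φhat (algebraMap R (RHat R φ z l) z) e * c i = 1 :=
  statement10_general R φ z l hl hcop φhat hφhat e heval
end

section
/- With notation as in the standing completion setup: the ring homomorphism R → eR̂ given by r ↦ e·(image of r in R̂) sends z to a topologically nilpotent element and induces a ring isomorphism from the (z)-adic completion R̂_z of R onto the corner ring eR̂. Moreover, for each n ≥ 1 the induced map R/(zⁿ) → eR̂/(e·τⁿ·R̂ ∩ eR̂) is an isomorphism, and the image of e in R/(τⁿ) equals the idempotent e_n corresponding to the projection onto R/(zⁿ) under the Chinese remainder isomorphism R/(τⁿ) ≅ R/(zⁿ) × R/(φ(z)ⁿ) × ⋯ × R/(φ^{l−1}(z)ⁿ). -/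
universe u

/-!
The factors of `τ = z · φ(z) ⋯ φ^{l-1}(z)` are pairwise coprime. Let `u ∈ R` lift `e` modulo
`τⁿ`; it is idempotent modulo `τⁿ`, and `u ≡ 1 mod z`, `u ≡ 0 mod φⁱ(z)` for `1 ≤ i < l`. Thus
`1 - u` modulo `zⁿ` and `u` modulo `φⁱ(z)ⁿ` are nilpotent idempotents, hence zero: `u` is the
Chinese remainder idempotent of `R ⧸ τⁿ` belonging to `zⁿ`. Consequently `e · r ∈ τⁿ R̂` exactly
when `r ∈ zⁿ R`, so `R ⧸ zⁿ → eR̂ ⧸ τⁿ` is injective; it is onto because `R ⧸ τⁿ = R̂ ⧸ τⁿ`.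
The corner `eR̂ ≅ R̂ ⧸ (1 - e)` of the `τ`-adically complete ring `R̂` is again `τ`-adically
complete, so these isomorphisms pass to the limit `R̂_z ≅ eR̂`.
-/

open Function

theorem pow_dvd_of_dvd_of_pow_dvd_mul_self_sub {R : Type*} [CommRing R] {x u : R} (n : ℕ)
    (hxu : x ∣ u) (hidem : x ^ n ∣ u * u - u) : x ^ n ∣ u := by
  rw [← Ideal.Quotient.eq_zero_iff_dvd] at hidem ⊢
  refine IsIdempotentElem.eq_zero_of_isNilpotent ?_ ⟨n, ?_⟩
  · rwa [map_sub, map_mul, sub_eq_zero] at hidem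
  · obtain ⟨d, rfl⟩ := hxu
    rw [← map_pow, Ideal.Quotient.eq_zero_iff_dvd, mul_pow]
    exact dvd_mul_right _ _

theorem prod_pow_dvd_mul_iff {R ι : Type*} [CommRing R] {s : Finset ι} {a : ι → R}
    (ha : (s : Set ι).Pairwise (IsCoprime on a)) {i₀ : ι} (hi₀ : i₀ ∈ s) {u : R} {n : ℕ}
    (hu₀ : a i₀ ^ n ∣ u - 1) (hu : ∀ i ∈ s, i ≠ i₀ → a i ^ n ∣ u) (r : R) :
    (∏ i ∈ s, a i) ^ n ∣ u * r ↔ a i₀ ^ n ∣ r := by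
  have hr : r = u * r - (u - 1) * r := by ring
  constructor
  · intro h
    rw [hr]
    exact dvd_sub ((pow_dvd_pow_of_dvd (Finset.dvd_prod_of_mem a hi₀) n).trans h)
      (hu₀.mul_right r)
  · intro h
    rw [← Finset.prod_pow]
    refine Finset.prod_dvd_of_coprime (ha.mono' fun i j hij => hij.pow) fun i hi => ?_
    rcases eq_or_ne i i₀ with rfl | hne
    · exact h.mul_left u
    · exact (hu i hi hne).mul_right r

namespace Ideal.Quotient

variable {S : Type*} [CommRing S] {e : S}

theorem mk_span_one_sub_mul (x : S) :
    mk (span {1 - e}) (e * x) = mk (span {1 - e}) x :=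
  (Ideal.Quotient.eq).mpr (mem_span_singleton.mpr ⟨-x, by ring⟩)

theorem mk_mem_map_span_one_sub_iff (he : IsIdempotentElem e) (I : Ideal S) (x : S) :
    mk (span {1 - e}) x ∈ I.map (mk (span {1 - e})) ↔ e * x ∈ I := by
  rw [mem_map_iff_of_surjective _ mk_surjective]
  constructor
  · rintro ⟨y, hy, hyx⟩
    obtain ⟨c, hc⟩ := mem_span_singleton.mp (Ideal.Quotient.eq.mp hyx)
    have : e * x = e * y := by linear_combination (-e) * hc + c * he.eq
    exact this ▸ I.mul_mem_left e hy
  · exact fun h => ⟨e * x, h, mk_span_one_sub_mul x⟩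

theorem isAdicComplete_span_one_sub (he : IsIdempotentElem e) (I : Ideal S)
    [IsAdicComplete I S] : IsAdicComplete (I.map (mk (span {1 - e}))) (S ⧸ span {1 - e}) := by
  have smodEq_iff : ∀ (n : ℕ) (x y : S),
      mk (span {1 - e}) x ≡ mk (span {1 - e}) y [SMOD ((I.map (mk (span {1 - e}))) ^ n • ⊤ :
          Submodule (S ⧸ span {1 - e}) (S ⧸ span {1 - e}))] ↔
        e * x ≡ e * y [SMOD (I ^ n • ⊤ : Submodule S S)] := by
    intro n x y
    simp only [SModEq.sub_mem, smul_eq_mul, Ideal.mul_top, ← Ideal.map_pow, ← map_sub,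
      mk_mem_map_span_one_sub_iff he, mul_sub]
  refine { haus' := fun x hx => ?_, prec' := fun f hf => ?_ }
  · obtain ⟨x, rfl⟩ := mk_surjective x
    have hex : e * x = 0 := IsHausdorff.haus' (I := I) (e * x) fun n => by
      have := (smodEq_iff n x 0).mp (by rw [map_zero]; exact hx n)
      rwa [mul_zero] at this
    rw [← mk_span_one_sub_mul, hex, map_zero]
  · choose F hF using fun n => mk_surjective (f n)
    obtain ⟨L, hL⟩ := IsPrecomplete.prec' (I := I) (fun n => e * F n) fun {m n} hmn =>
      (smodEq_iff m _ _).mp (by rw [hF, hF]; exact hf hmn)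
    refine ⟨mk (span {1 - e}) L, fun n => ?_⟩
    rw [← hF, smodEq_iff]
    have := (hL n).smul e
    rwa [smul_eq_mul, smul_eq_mul, ← mul_assoc, he.eq] at this

end Ideal.Quotient

namespace AdicCompletion

variable {R : Type*} [CommRing R] {I : Ideal R}

theorem factorPow_evalₐ {m n : ℕ} (hle : m ≤ n) (x : AdicCompletion I R) :
    Ideal.Quotient.factorPow I hle (evalₐ I n x) = evalₐ I m x := by
  obtain ⟨x, rfl⟩ := mk_surjective I R x
  simp [Ideal.Quotient.factorPow, Ideal.mk_eq_mk I hle]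

theorem mem_map_algebraMap_pow_iff (hI : I.FG) (n : ℕ) (x : AdicCompletion I R) :
    x ∈ (I.map (algebraMap R (AdicCompletion I R))) ^ n ↔ eval I R n x = 0 := by
  rw [← Ideal.map_pow, ← LinearMap.mem_ker, ← pow_smul_top_eq_ker_eval hI, Ideal.smul_top_eq_map]
  rfl

theorem isAdicComplete_map_algebraMap (hI : I.FG) :
    IsAdicComplete (I.map (algebraMap R (AdicCompletion I R))) (AdicCompletion I R) :=
  (IsAdicComplete.map_algebraMap_iff I _).mpr (isAdicComplete hI)

theorem exists_sub_algebraMap_mem (hI : I.FG) (n : ℕ) (x : AdicCompletion I R) :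
    ∃ r : R, x - algebraMap R _ r ∈ (I.map (algebraMap R (AdicCompletion I R))) ^ n := by
  obtain ⟨r, hr⟩ := Submodule.Quotient.mk_surjective _ (eval I R n x)
  refine ⟨r, (mem_map_algebraMap_pow_iff hI n _).mpr ?_⟩
  rw [map_sub, ← hr, algebraMap_apply, Algebra.algebraMap_self, RingHom.id_apply, eval_of,
    Submodule.mkQ_apply, sub_self]

section Corner

open Ideal.Quotient

variable (J : Ideal R) {e : AdicCompletion I R}

variable (I e) in
/-- `r ↦ e · r`, with the corner ring `eR̂` realised as `R̂ ⧸ (1 - e)`. -/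
noncomputable def toCorner : R →+* AdicCompletion I R ⧸ Ideal.span {1 - e} :=
  (Ideal.Quotient.mk _).comp (algebraMap R _)

variable (e) in
def CutsOut : Prop :=
  ∀ n r, e * algebraMap R _ r ∈ (I.map (algebraMap R (AdicCompletion I R))) ^ n ↔ r ∈ J ^ n

theorem toCorner_mem_map_pow_iff (he : IsIdempotentElem e) (n : ℕ) (r : R) :
    toCorner I e r ∈ (I.map (toCorner I e)) ^ n ↔
      e * algebraMap R _ r ∈ (I.map (algebraMap R (AdicCompletion I R))) ^ n := by
  rw [toCorner, ← Ideal.map_map, ← Ideal.map_pow]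
  exact mk_mem_map_span_one_sub_iff he _ _

theorem toCorner_mem_map_of_mem (he : IsIdempotentElem e) (hcorner : CutsOut J e) {r : R}
    (hr : r ∈ J) : toCorner I e r ∈ I.map (toCorner I e) := by
  simpa using (toCorner_mem_map_pow_iff he 1 r).mpr ((hcorner 1 r).mpr (by simpa using hr))

theorem ker_toCorner_mod (he : IsIdempotentElem e) (hcorner : CutsOut J e) (n : ℕ) :
    RingHom.ker ((Ideal.Quotient.mk ((I.map (toCorner I e)) ^ n)).comp (toCorner I e)) =
      J ^ n := by
  ext r
  rw [RingHom.mem_ker, RingHom.comp_apply, eq_zero_iff_mem, toCorner_mem_map_pow_iff he, hcorner]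

theorem surjective_toCorner_mod (hI : I.FG) (n : ℕ) :
    Function.Surjective ((Ideal.Quotient.mk ((I.map (toCorner I e)) ^ n)).comp (toCorner I e)) := by
  intro q
  obtain ⟨b, rfl⟩ := Ideal.Quotient.mk_surjective q
  obtain ⟨x, rfl⟩ := Ideal.Quotient.mk_surjective b
  obtain ⟨r, hr⟩ := exists_sub_algebraMap_mem hI n x
  refine ⟨r, (Ideal.Quotient.eq.mpr ?_).symm⟩
  rw [toCorner, ← Ideal.map_map, ← Ideal.map_pow, RingHom.comp_apply, ← map_sub]
  exact Ideal.mem_map_of_mem _ hr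

theorem isAdicComplete_corner (hI : I.FG) (he : IsIdempotentElem e) :
    IsAdicComplete (I.map (toCorner I e)) (AdicCompletion I R ⧸ Ideal.span {1 - e}) := by
  have := isAdicComplete_map_algebraMap hI
  rw [toCorner, ← Ideal.map_map]
  exact isAdicComplete_span_one_sub he _

variable (hI : I.FG) (he : IsIdempotentElem e) (hcorner : CutsOut J e)

noncomputable def cornerQuotEquiv (n : ℕ) :
    R ⧸ J ^ n ≃+* (AdicCompletion I R ⧸ Ideal.span {1 - e}) ⧸ (I.map (toCorner I e)) ^ n :=
  (Ideal.quotEquivOfEq (ker_toCorner_mod J he hcorner n).symm).trans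
    (RingHom.quotientKerEquivOfSurjective (surjective_toCorner_mod hI n))

theorem cornerQuotEquiv_mk (n : ℕ) (r : R) :
    cornerQuotEquiv J hI he hcorner n (Ideal.Quotient.mk _ r) =
      Ideal.Quotient.mk _ (toCorner I e r) :=
  rfl

theorem factorPow_cornerQuotEquiv {m n : ℕ} (hle : m ≤ n) (x : R ⧸ J ^ n) :
    factorPow _ hle (cornerQuotEquiv J hI he hcorner n x) =
      cornerQuotEquiv J hI he hcorner m (factorPow J hle x) := by
  obtain ⟨r, rfl⟩ := Ideal.Quotient.mk_surjective x
  simp only [cornerQuotEquiv_mk, factorPow, factor_mk]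

theorem factorPow_comp_cornerQuotEquiv_comp_evalₐ {m n : ℕ} (hle : m ≤ n) :
    (factorPow _ hle).comp ((cornerQuotEquiv J hI he hcorner n).toRingHom.comp
      (evalₐ J n).toRingHom) =
      (cornerQuotEquiv J hI he hcorner m).toRingHom.comp (evalₐ J m).toRingHom :=
  RingHom.ext fun x => by
    simp only [RingHom.comp_apply, RingEquiv.toRingHom_eq_coe, AlgHom.toRingHom_eq_coe,
      RingHom.coe_coe, factorPow_cornerQuotEquiv, factorPow_evalₐ]

noncomputable def cornerHom : AdicCompletion J R →+* AdicCompletion I R ⧸ Ideal.span {1 - e} :=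
  @IsAdicComplete.liftRingHom _ _ _ _ _ (isAdicComplete_corner hI he)
    (fun n => (cornerQuotEquiv J hI he hcorner n).toRingHom.comp (evalₐ J n).toRingHom)
    (factorPow_comp_cornerQuotEquiv_comp_evalₐ J hI he hcorner)

theorem factorPow_comp_cornerQuotEquiv_symm_comp_mk {m n : ℕ} (hle : m ≤ n) :
    (factorPow J hle).comp ((cornerQuotEquiv J hI he hcorner n).symm.toRingHom.comp
      (Ideal.Quotient.mk ((I.map (toCorner I e)) ^ n))) =
      (cornerQuotEquiv J hI he hcorner m).symm.toRingHom.comp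
        (Ideal.Quotient.mk ((I.map (toCorner I e)) ^ m)) :=
  RingHom.ext fun b => (cornerQuotEquiv J hI he hcorner m).injective <| by
    simp only [RingHom.comp_apply, RingEquiv.toRingHom_eq_coe, RingHom.coe_coe]
    rw [← factorPow_cornerQuotEquiv, RingEquiv.apply_symm_apply, RingEquiv.apply_symm_apply]
    rfl

noncomputable def cornerInvHom : AdicCompletion I R ⧸ Ideal.span {1 - e} →+* AdicCompletion J R :=
  AdicCompletion.liftRingHom J
    (fun n => (cornerQuotEquiv J hI he hcorner n).symm.toRingHom.comp
      (Ideal.Quotient.mk ((I.map (toCorner I e)) ^ n)))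
    (factorPow_comp_cornerQuotEquiv_symm_comp_mk J hI he hcorner)

theorem mk_cornerHom (n : ℕ) (x : AdicCompletion J R) :
    Ideal.Quotient.mk _ (cornerHom J hI he hcorner x) =
      cornerQuotEquiv J hI he hcorner n (evalₐ J n x) :=
  @IsAdicComplete.mk_liftRingHom _ _ _ _ _ (isAdicComplete_corner hI he) _
    (factorPow_comp_cornerQuotEquiv_comp_evalₐ J hI he hcorner) n x

theorem evalₐ_cornerInvHom (n : ℕ) (b : AdicCompletion I R ⧸ Ideal.span {1 - e}) :
    evalₐ J n (cornerInvHom J hI he hcorner b) =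
      (cornerQuotEquiv J hI he hcorner n).symm (Ideal.Quotient.mk _ b) :=
  evalₐ_liftRingHom _ _ (factorPow_comp_cornerQuotEquiv_symm_comp_mk J hI he hcorner) n b

noncomputable def cornerEquiv : AdicCompletion J R ≃+* AdicCompletion I R ⧸ Ideal.span {1 - e} :=
  RingEquiv.ofRingHom (cornerHom J hI he hcorner) (cornerInvHom J hI he hcorner)
    (by
      have := isAdicComplete_corner hI he
      refine RingHom.ext <| congrFun <| IsHausdorff.funext' (I.map (toCorner I e)) fun n b => ?_
      rw [RingHom.comp_apply, mk_cornerHom, evalₐ_cornerInvHom, RingEquiv.apply_symm_apply]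
      rfl)
    (RingHom.ext fun x => ext_evalₐ fun n => by
      simp [evalₐ_cornerInvHom, mk_cornerHom])

theorem mk_cornerEquiv (n : ℕ) (x : AdicCompletion J R) :
    Ideal.Quotient.mk _ (cornerEquiv J hI he hcorner x) =
      cornerQuotEquiv J hI he hcorner n (evalₐ J n x) :=
  mk_cornerHom J hI he hcorner n x

theorem cornerEquiv_algebraMap (r : R) :
    cornerEquiv J hI he hcorner (algebraMap R _ r) = toCorner I e r := by
  have := isAdicComplete_corner hI he
  refine congrFun (IsHausdorff.funext' (I.map (toCorner I e)) (f := fun r =>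
    cornerEquiv J hI he hcorner (algebraMap R _ r)) fun n r => ?_) r
  rw [mk_cornerEquiv, algebraMap_apply, Algebra.algebraMap_self, RingHom.id_apply, evalₐ_of]
  rfl

theorem cornerEquiv_mem_pow_of_eval_eq_zero {n : ℕ} {x : AdicCompletion J R}
    (hx : eval J R n x = 0) : cornerEquiv J hI he hcorner x ∈ (I.map (toCorner I e)) ^ n := by
  rw [← Ideal.Quotient.eq_zero_iff_mem, mk_cornerEquiv J hI he hcorner n,
    ← factor_eval_eq_evalₐ J x (by rw [smul_eq_mul, Ideal.mul_top]), hx, _root_.map_zero,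
    _root_.map_zero]

end Corner

section ChineseRemainder

variable {ι : Type*} {s : Finset ι} {a : ι → R} {i₀ : ι}

theorem exists_eval_eq_mk_of_isIdempotentElem {e : AdicCompletion I R}
    (he : IsIdempotentElem e) {v : R} (hv : eval I R 1 e = Submodule.Quotient.mk v) {n : ℕ}
    (hn : 1 ≤ n) :
    ∃ u : R, eval I R n e = Submodule.Quotient.mk u ∧ u - v ∈ I ∧ u * u - u ∈ I ^ n := by
  obtain ⟨u, hu⟩ := Submodule.Quotient.mk_surjective _ (eval I R n e)
  have hun : e.val n = Ideal.Quotient.mk _ u := hu.symm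
  refine ⟨u, hu.symm, ?_, ?_⟩
  · have h1 := transitionMap_comp_eval_apply I R hn e
    rw [hun, transitionMap_ideal_mk] at h1
    have h2 : Ideal.Quotient.mk _ u = Ideal.Quotient.mk _ v := h1.trans hv
    simpa using Ideal.Quotient.eq.mp h2
  · have h1 : (e * e).val n = e.val n := by rw [he.eq]
    rw [val_mul, hun, ← map_mul] at h1
    simpa using Ideal.Quotient.eq.mp h1

theorem exists_eval_eq_mk_of_isIdempotentElem_prod (hi₀ : i₀ ∈ s)
    {e : AdicCompletion (Ideal.span {∏ i ∈ s, a i}) R} (he : IsIdempotentElem e) {v : R}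
    (hv : eval _ R 1 e = Submodule.Quotient.mk v) (hv₀ : a i₀ ∣ v - 1)
    (hv₁ : ∀ i ∈ s, i ≠ i₀ → a i ∣ v) {n : ℕ} (hn : 1 ≤ n) :
    ∃ u : R, eval _ R n e = Submodule.Quotient.mk u ∧
      a i₀ ^ n ∣ u - 1 ∧ ∀ i ∈ s, i ≠ i₀ → a i ^ n ∣ u := by
  obtain ⟨u, hu, huv, hidem⟩ := exists_eval_eq_mk_of_isIdempotentElem he hv hn
  rw [Ideal.mem_span_singleton] at huv
  rw [Ideal.span_singleton_pow, Ideal.mem_span_singleton] at hidem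
  have hdvd : ∀ i ∈ s, a i ^ n ∣ (∏ i ∈ s, a i) ^ n :=
    fun i hi => pow_dvd_pow_of_dvd (Finset.dvd_prod_of_mem a hi) n
  refine ⟨u, hu, ?_, fun i hi hne => ?_⟩
  · rw [dvd_sub_comm]
    refine pow_dvd_of_dvd_of_pow_dvd_mul_self_sub n ?_ ((hdvd i₀ hi₀).trans ?_)
    · have := dvd_add ((Finset.dvd_prod_of_mem a hi₀).trans huv) hv₀
      rwa [sub_add_sub_cancel, dvd_sub_comm] at this
    · convert hidem using 1
      ring
  · refine pow_dvd_of_dvd_of_pow_dvd_mul_self_sub n ?_ ((hdvd i hi).trans hidem)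
    simpa using dvd_add ((Finset.dvd_prod_of_mem a hi).trans huv) (hv₁ i hi hne)

theorem cutsOut_span_of_prod (ha : (s : Set ι).Pairwise (IsCoprime on a))
    (hi₀ : i₀ ∈ s) {e : AdicCompletion (Ideal.span {∏ i ∈ s, a i}) R}
    (he : IsIdempotentElem e) {v : R} (hv : eval _ R 1 e = Submodule.Quotient.mk v)
    (hv₀ : a i₀ ∣ v - 1) (hv₁ : ∀ i ∈ s, i ≠ i₀ → a i ∣ v) :
    CutsOut (Ideal.span {a i₀}) e := by
  intro n r
  rcases Nat.eq_zero_or_pos n with rfl | hn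
  · simp
  obtain ⟨u, hu, hu₀, hu₁⟩ := exists_eval_eq_mk_of_isIdempotentElem_prod hi₀ he hv hv₀ hv₁ hn
  have heval : eval _ R n (e * algebraMap R _ r) = Ideal.Quotient.mk _ (u * r) := by
    rw [AdicCompletion.eval_apply, val_mul, ← AdicCompletion.eval_apply, hu, map_mul]
    rfl
  rw [mem_map_algebraMap_pow_iff (Submodule.fg_span_singleton _), heval,
    Ideal.Quotient.eq_zero_iff_mem, smul_eq_mul, Ideal.mul_top, Ideal.span_singleton_pow,
    Ideal.span_singleton_pow, Ideal.mem_span_singleton, Ideal.mem_span_singleton]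
  exact prod_pow_dvd_mul_iff ha hi₀ hu₀ hu₁ r

end ChineseRemainder

end AdicCompletion

theorem pairwise_isCoprime_pow_apply {R : Type*} [CommRing R] (φ : R ≃+* R) (z : R) {l : ℕ}
    (hcop : ∀ i : ℕ, 1 ≤ i → i ≤ l - 1 → Ideal.span {z, (φ ^ i) z} = ⊤) :
    (Finset.range l : Set ℕ).Pairwise (IsCoprime on fun i => (φ ^ i) z) := by
  have coprime_of_lt : ∀ i j, i < j → j < l → IsCoprime ((φ ^ i) z) ((φ ^ j) z) := by
    intro i j hij hjl
    obtain ⟨k, rfl⟩ := Nat.exists_eq_add_of_lt hij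
    have h := hcop (k + 1) (by omega) (by omega)
    rw [Ideal.span_insert, ← Ideal.isCoprime_iff_sup_eq, Ideal.isCoprime_span_singleton_iff] at h
    convert h.map (φ ^ i : R ≃+* R).toRingHom using 1
    · simp
    · rw [add_assoc, pow_add]
      rfl
  intro i hi j hj hij
  simp only [Finset.coe_range, Set.mem_Iio] at hi hj
  rcases hij.lt_or_gt with h | h
  · exact coprime_of_lt i j h hj
  · exact (coprime_of_lt j i h hi).symm

theorem statement14_general (R : Type u) [CommRing R] (φ : R ≃+* R) (z : R) (l : ℕ)
    (hl : 1 ≤ l)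
    (hcop : ∀ i : ℕ, 1 ≤ i → i ≤ l - 1 → Ideal.span {z, (φ ^ i) z} = ⊤)
    (e : RHat R φ z l) (he : e * e = e)
    (heval : ∃ r : R, RHat.proj R φ z l 1 e = Submodule.Quotient.mk r ∧
      r - 1 ∈ Ideal.span {z} ∧
      ∀ i : ℕ, 1 ≤ i → i ≤ l - 1 → r ∈ Ideal.span {(φ ^ i) z}) :
    (∀ n : ℕ, ∃ m : ℕ,
      (Ideal.Quotient.mk (Ideal.span {1 - e}) (algebraMap R (RHat R φ z l) z)) ^ m ∈
        (Ideal.span {Ideal.Quotient.mk (Ideal.span {1 - e})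
          (algebraMap R (RHat R φ z l) (gwaTau R φ z l))}) ^ n) ∧
    (∃ g : AdicCompletion (Ideal.span {z}) R ≃+*
        (RHat R φ z l ⧸ Ideal.span {1 - e}),
      (∀ r : R, g (algebraMap R (AdicCompletion (Ideal.span {z}) R) r) =
        Ideal.Quotient.mk (Ideal.span {1 - e}) (algebraMap R (RHat R φ z l) r)) ∧
      (∀ n : ℕ, ∃ m : ℕ, ∀ x : AdicCompletion (Ideal.span {z}) R,
        AdicCompletion.eval (Ideal.span {z}) R m x = 0 →
          g x ∈ (Ideal.span {Ideal.Quotient.mk (Ideal.span {1 - e})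
            (algebraMap R (RHat R φ z l) (gwaTau R φ z l))}) ^ n)) ∧
    (∀ n : ℕ, 1 ≤ n →
      ∃ gn : (R ⧸ Ideal.span {z ^ n}) ≃+*
          ((RHat R φ z l ⧸ Ideal.span {1 - e}) ⧸
            Ideal.span {(Ideal.Quotient.mk (Ideal.span {1 - e})
              (algebraMap R (RHat R φ z l) (gwaTau R φ z l))) ^ n}),
        ∀ r : R, gn (Ideal.Quotient.mk (Ideal.span {z ^ n}) r) =
          Ideal.Quotient.mk _ (Ideal.Quotient.mk (Ideal.span {1 - e})
            (algebraMap R (RHat R φ z l) r))) ∧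
    (∀ n : ℕ, 1 ≤ n → ∃ r : R,
      RHat.proj R φ z l n e = Submodule.Quotient.mk r ∧
      r - 1 ∈ Ideal.span {z ^ n} ∧
      ∀ i : ℕ, 1 ≤ i → i ≤ l - 1 → r ∈ Ideal.span {((φ ^ i) z) ^ n}) := by
  obtain ⟨v, hv, hv₀, hv₁⟩ := heval
  have hI : (Ideal.span {gwaTau R φ z l}).FG := Submodule.fg_span_singleton _
  have h0 : 0 ∈ Finset.range l := Finset.mem_range.mpr hl
  have hv₀' : (φ ^ 0) z ∣ v - 1 := Ideal.mem_span_singleton.mp hv₀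
  have hv₁' : ∀ i ∈ Finset.range l, i ≠ 0 → (φ ^ i) z ∣ v := fun i hi hi₀ =>
    Ideal.mem_span_singleton.mp (hv₁ i (by omega) (by simp at hi; omega))
  have hcorner : AdicCompletion.CutsOut (Ideal.span {z}) e :=
    AdicCompletion.cutsOut_span_of_prod (pairwise_isCoprime_pow_apply φ z hcop) h0 he hv hv₀' hv₁'
  have hIB : (Ideal.span {gwaTau R φ z l}).map (AdicCompletion.toCorner _ e) =
      Ideal.span {Ideal.Quotient.mk _ (algebraMap R _ (gwaTau R φ z l))} := by
    rw [Ideal.map_span, Set.image_singleton]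
    rfl
  refine ⟨fun n => ⟨n, ?_⟩, ⟨AdicCompletion.cornerEquiv _ hI he hcorner,
    AdicCompletion.cornerEquiv_algebraMap _ hI he hcorner, fun n => ⟨n, fun x hx => ?_⟩⟩,
    fun n _ => ⟨(Ideal.quotEquivOfEq (Ideal.span_singleton_pow z n).symm).trans
      ((AdicCompletion.cornerQuotEquiv _ hI he hcorner n).trans
        (Ideal.quotEquivOfEq (by rw [hIB, Ideal.span_singleton_pow]))), fun r => rfl⟩,
    fun n hn => ?_⟩
  · rw [← hIB]
    exact Ideal.pow_mem_pow (AdicCompletion.toCorner_mem_map_of_mem _ he hcorner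
      (Ideal.mem_span_singleton_self z)) n
  · rw [← hIB]
    exact AdicCompletion.cornerEquiv_mem_pow_of_eval_eq_zero _ hI he hcorner hx
  · obtain ⟨u, hu, hu₀, hu₁⟩ :=
      AdicCompletion.exists_eval_eq_mk_of_isIdempotentElem_prod h0 he hv hv₀' hv₁' hn
    refine ⟨u, hu, by simpa [Ideal.mem_span_singleton] using hu₀, fun i hi hil =>
      Ideal.mem_span_singleton.mpr (hu₁ i (Finset.mem_range.mpr (by omega)) (by omega))⟩

/-- (Standing completion setup.)  The ring homomorphism `f : R → eR̂`,
`r ↦ e·r̂` (with the corner ring `eR̂` realized as the quotient `R̂/(1−e)`) sends `z` to a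
topologically nilpotent element, and induces a (continuous) ring isomorphism from the
`(z)`-adic completion `R̂_z` of `R` onto `eR̂`.  Moreover, for each `n ≥ 1` the induced map
`R/(zⁿ) → eR̂/(e·τⁿ·R̂)` is an isomorphism, and the image of `e` in `R/(τⁿ)` equals the
idempotent `eₙ` corresponding to the projection onto `R/(zⁿ)` under the Chinese remainder
isomorphism `R/(τⁿ) ≅ R/(zⁿ) × R/(φ(z)ⁿ) × ⋯ × R/(φ^{l−1}(z)ⁿ)`, i.e. `eₙ ≡ 1 mod (zⁿ)` and
`eₙ ≡ 0 mod (φⁱ(z)ⁿ)` for `1 ≤ i ≤ l−1`. -/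
theorem statement14 (R : Type u) [CommRing R] (φ : R ≃+* R) (z b : R) (l : ℕ)
    (hz : z ∈ nonZeroDivisors R) (hb : IsNilpotent b) (hl : 1 ≤ l)
    (hφl : ∃ r : R, (φ ^ l) z - z = b * r)
    (hcop : ∀ i : ℕ, 1 ≤ i → i ≤ l - 1 → Ideal.span {z, (φ ^ i) z} = ⊤)
    (φhat : RHat R φ z l ≃+* RHat R φ z l)
    (hφhat : ∀ r : R, φhat (algebraMap R (RHat R φ z l) r) = algebraMap R (RHat R φ z l) (φ r))
    (hφcont : ∀ n : ℕ, ∃ m : ℕ, ∀ x : RHat R φ z l,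
      RHat.proj R φ z l m x = 0 → RHat.proj R φ z l n (φhat x) = 0)
    (e : RHat R φ z l) (he : e * e = e)
    (heval : ∃ r : R, RHat.proj R φ z l 1 e = Submodule.Quotient.mk r ∧
      r - 1 ∈ Ideal.span {z} ∧
      ∀ i : ℕ, 1 ≤ i → i ≤ l - 1 → r ∈ Ideal.span {(φ ^ i) z}) :
    (∀ n : ℕ, ∃ m : ℕ,
      (Ideal.Quotient.mk (Ideal.span {1 - e}) (algebraMap R (RHat R φ z l) z)) ^ m ∈
        (Ideal.span {Ideal.Quotient.mk (Ideal.span {1 - e})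
          (algebraMap R (RHat R φ z l) (gwaTau R φ z l))}) ^ n) ∧
    (∃ g : AdicCompletion (Ideal.span {z}) R ≃+*
        (RHat R φ z l ⧸ Ideal.span {1 - e}),
      (∀ r : R, g (algebraMap R (AdicCompletion (Ideal.span {z}) R) r) =
        Ideal.Quotient.mk (Ideal.span {1 - e}) (algebraMap R (RHat R φ z l) r)) ∧
      (∀ n : ℕ, ∃ m : ℕ, ∀ x : AdicCompletion (Ideal.span {z}) R,
        AdicCompletion.eval (Ideal.span {z}) R m x = 0 →
          g x ∈ (Ideal.span {Ideal.Quotient.mk (Ideal.span {1 - e})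
            (algebraMap R (RHat R φ z l) (gwaTau R φ z l))}) ^ n)) ∧
    (∀ n : ℕ, 1 ≤ n →
      ∃ gn : (R ⧸ Ideal.span {z ^ n}) ≃+*
          ((RHat R φ z l ⧸ Ideal.span {1 - e}) ⧸
            Ideal.span {(Ideal.Quotient.mk (Ideal.span {1 - e})
              (algebraMap R (RHat R φ z l) (gwaTau R φ z l))) ^ n}),
        ∀ r : R, gn (Ideal.Quotient.mk (Ideal.span {z ^ n}) r) =
          Ideal.Quotient.mk _ (Ideal.Quotient.mk (Ideal.span {1 - e})
            (algebraMap R (RHat R φ z l) r))) ∧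
    (∀ n : ℕ, 1 ≤ n → ∃ r : R,
      RHat.proj R φ z l n e = Submodule.Quotient.mk r ∧
      r - 1 ∈ Ideal.span {z ^ n} ∧
      ∀ i : ℕ, 1 ≤ i → i ≤ l - 1 → r ∈ Ideal.span {((φ ^ i) z) ^ n}) :=
  statement14_general R φ z l hl hcop e he heval
end
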